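/- arXiv:2407.16130 — 7 statements merged into one kernel-verified Lean document; each statement's English description precedes it below -/
import Mathlib

section
/- Let (X,E) be a uniformly locally finite graph with M = sup over x of the number of edges incident to x, and let ε > 0. Set L = max{1, M(1+ε⁻¹)}. Then for every finitely supported probability measure η on X, the function η'(x) = Σ_w L^{-d(x,w)} η(w) (where d is the graph metric) satisfies: (1) η' ≥ η pointwise and ‖η'‖₁ ≤ 1 + ε; (2) L⁻¹ η'(x) ≤ η'(y) ≤ L η'(x) for every edge (x,y) ∈ E; (3) for every subset V ⊆ X, the ℓ¹-norm of the restriction of η' to V is at most ε^{dist(V, supp η)} · (1+ε)^{1 - dist(V, supp η)}. -/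
open scoped ENNReal

/-- `L^{-d}` for an extended-natural distance `d`, interpreted as `0` when `d = ∞`. -/
noncomputable def invPow (L : ℝ) (d : ℕ∞) : ℝ := if d = ⊤ then 0 else L⁻¹ ^ d.toNat

lemma invPow_nonneg {L : ℝ} (hL : 0 < L) (d : ℕ∞) : 0 ≤ invPow L d := by
  unfold invPow; split
  · exact le_rfl
  · positivity

lemma invPow_le_one {L : ℝ} (hL : 1 ≤ L) (d : ℕ∞) : invPow L d ≤ 1 := by
  unfold invPow; split
  · norm_num
  · exact pow_le_one₀ (by positivity) (inv_le_one_of_one_le₀ hL)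

lemma edist_getVert_le {X : Type*} {G : SimpleGraph X} {w x : X} (p : G.Walk w x) (i : ℕ) :
    G.edist w (p.getVert i) ≤ i := by
  induction p generalizing i with
  | nil => simp [SimpleGraph.Walk.getVert]
  | @cons u v z h q ih =>
    cases i with
    | zero => simp
    | succ j =>
      rw [SimpleGraph.Walk.getVert_cons_succ]
      calc G.edist u (q.getVert j) ≤ G.edist u v + G.edist v (q.getVert j) :=
            SimpleGraph.edist_triangle
        _ ≤ 1 + (j : ℕ∞) :=
            add_le_add (le_of_eq (SimpleGraph.edist_eq_one_iff_adj.mpr h)) (ih j)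
        _ = ((j + 1 : ℕ) : ℕ∞) := by push_cast; rw [add_comm]

lemma exists_adj_of_edist_succ {X : Type*} {G : SimpleGraph X} {w x : X} {m : ℕ}
    (h : G.edist w x = (m : ℕ∞) + 1) :
    ∃ y, G.edist w y = m ∧ G.Adj y x := by
  have h' : G.edist w x = ((m + 1 : ℕ) : ℕ∞) := by push_cast; exact h
  obtain ⟨p, hp⟩ := SimpleGraph.exists_walk_of_edist_eq_coe h'
  refine ⟨p.getVert m, ?_, ?_⟩
  · have hle : G.edist w (p.getVert m) ≤ m := edist_getVert_le p m
    have hadj : G.Adj (p.getVert m) x := by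
      have := p.adj_getVert_succ (i := m) (by omega)
      rwa [show p.getVert (m + 1) = x by rw [← hp]; exact p.getVert_length] at this
    have hge : (m : ℕ∞) ≤ G.edist w (p.getVert m) := by
      have h2 : G.edist w x ≤ G.edist w (p.getVert m) + 1 :=
        le_trans SimpleGraph.edist_triangle
          (add_le_add le_rfl (le_of_eq (SimpleGraph.edist_eq_one_iff_adj.mpr hadj)))
      rw [h'] at h2
      obtain ⟨k, hk, hkm⟩ := ENat.le_coe_iff.mp hle
      rw [hk] at h2 ⊢
      push_cast at h2
      exact_mod_cast by
        have : (m : ℕ) + 1 ≤ k + 1 := by exact_mod_cast h2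
        omega
    exact le_antisymm hle hge
  · have := p.adj_getVert_succ (i := m) (by omega)
    rwa [show p.getVert (m + 1) = x by rw [← hp]; exact p.getVert_length] at this

lemma sphere_card {X : Type*} (G : SimpleGraph X) (M : ℕ)
    (hM : ∀ x : X, (G.neighborSet x).Finite ∧ (G.neighborSet x).ncard ≤ M) (w : X) :
    ∀ m : ℕ, ∃ t : Finset X, {x | G.edist w x = (m : ℕ∞)} ⊆ ↑t ∧ t.card ≤ M ^ m := by
  classical
  intro m
  induction m with
  | zero =>
    refine ⟨{w}, ?_, by simp⟩
    intro x hx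
    simp only [Set.mem_setOf_eq, Nat.cast_zero, SimpleGraph.edist_eq_zero_iff] at hx
    simp [hx]
  | succ m ih =>
    obtain ⟨t, hts, htc⟩ := ih
    refine ⟨t.biUnion (fun y => (hM y).1.toFinset), ?_, ?_⟩
    · intro x hx
      simp only [Set.mem_setOf_eq] at hx
      obtain ⟨y, hy, hadj⟩ := exists_adj_of_edist_succ (by push_cast at hx ⊢; exact hx)
      simp only [Finset.coe_biUnion, Set.mem_iUnion, Finset.mem_coe]
      exact ⟨y, hts hy, by simp [Set.Finite.mem_toFinset, SimpleGraph.mem_neighborSet, hadj]⟩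
    · calc (t.biUnion (fun y => (hM y).1.toFinset)).card
          ≤ ∑ y ∈ t, (hM y).1.toFinset.card := Finset.card_biUnion_le
        _ ≤ ∑ _y ∈ t, M := Finset.sum_le_sum (fun y _ => by
            rw [← Set.ncard_eq_toFinset_card _ (hM y).1]
            exact (hM y).2)
        _ = t.card * M := by simp [Finset.sum_const, mul_comm]
        _ ≤ M ^ m * M := Nat.mul_le_mul_right _ htc
        _ = M ^ (m + 1) := by ring

lemma core_tsum_le {X : Type*} (G : SimpleGraph X) (M : ℕ)
    (hM : ∀ x : X, (G.neighborSet x).Finite ∧ (G.neighborSet x).ncard ≤ M)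
    {ε L : ℝ} (hε : 0 < ε) (hL1 : 1 ≤ L) (hr : (M : ℝ) * L⁻¹ ≤ ε / (1 + ε))
    (w : X) (V : Set X) (n : ℕ) (hV : ∀ v ∈ V, (n : ℕ∞) ≤ G.edist w v) :
    ∑' x : X, V.indicator (fun x => ENNReal.ofReal (invPow L (G.edist w x))) x
      ≤ ENNReal.ofReal ((ε / (1 + ε)) ^ n * (1 + ε)) := by
  have hL0 : (0 : ℝ) < L := lt_of_lt_of_le one_pos hL1
  set r : ℝ := ε / (1 + ε) with hrdef
  have hr0 : 0 ≤ r := by positivity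
  have hr1 : r < 1 := by
    rw [hrdef, div_lt_one (by linarith)]; linarith
  set f : X → ℝ≥0∞ := fun x => ENNReal.ofReal (invPow L (G.edist w x)) with hf
  set S : ℕ → Set X := fun m => {z | G.edist w z = (m : ℕ∞)} with hS
  have hpt : ∀ x, V.indicator f x = ∑' m : ℕ, (V ∩ S m).indicator f x := by
    intro x
    by_cases hxV : x ∈ V
    · by_cases hd : G.edist w x = ⊤
      · have hfx : f x = 0 := by simp [hf, invPow, hd]
        rw [Set.indicator_of_mem hxV, hfx]
        symm
        rw [ENNReal.tsum_eq_zero]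
        intro m
        apply Set.indicator_of_notMem
        rintro ⟨-, h2⟩
        have h2' : G.edist w x = (m : ℕ∞) := h2
        rw [hd] at h2'
        exact (ENat.coe_ne_top m) h2'.symm
      · set m₀ : ℕ := (G.edist w x).toNat with hm₀def
        have hm₀ : G.edist w x = (m₀ : ℕ∞) := (ENat.coe_toNat hd).symm
        rw [Set.indicator_of_mem hxV, tsum_eq_single m₀ ?_]
        · exact (Set.indicator_of_mem (Set.mem_inter hxV (show x ∈ S m₀ from hm₀)) f).symm
        · intro m hm
          apply Set.indicator_of_notMem
          rintro ⟨-, h2⟩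
          have h2' : G.edist w x = (m : ℕ∞) := h2
          exact hm (by exact_mod_cast h2'.symm.trans hm₀)
    · rw [Set.indicator_of_notMem hxV]
      symm; rw [ENNReal.tsum_eq_zero]
      intro m
      exact Set.indicator_of_notMem (fun hmem => hxV hmem.1) f
  calc ∑' x : X, V.indicator f x
      = ∑' x : X, ∑' m : ℕ, (V ∩ S m).indicator f x := tsum_congr hpt
    _ = ∑' m : ℕ, ∑' x : X, (V ∩ S m).indicator f x := ENNReal.tsum_comm
    _ ≤ ∑' m : ℕ, (if m < n then 0 else ENNReal.ofReal (r ^ m)) := by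
        apply ENNReal.tsum_le_tsum
        intro m
        by_cases hmn : m < n
        · rw [if_pos hmn]
          have hempty : V ∩ S m = ∅ := by
            ext z
            simp only [Set.mem_inter_iff, Set.mem_empty_iff_false, iff_false, not_and]
            intro hzV hz
            have := hV z hzV
            rw [hz] at this
            exact absurd (by exact_mod_cast this) (by omega)
          rw [hempty]
          simp
        · rw [if_neg hmn]
          push_neg at hmn
          obtain ⟨t, hts, htc⟩ := sphere_card G M hM w m
          have hzero : ∀ x ∉ t, (V ∩ S m).indicator f x = 0 := fun x hx =>
            Set.indicator_of_notMem (fun hmem => hx (hts hmem.2)) f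
          calc ∑' x : X, (V ∩ S m).indicator f x
              = ∑ x ∈ t, (V ∩ S m).indicator f x := tsum_eq_sum hzero
            _ ≤ ∑ _x ∈ t, ENNReal.ofReal (L⁻¹ ^ m) := by
                apply Finset.sum_le_sum
                intro x _
                by_cases hmem : x ∈ V ∩ S m
                · rw [Set.indicator_of_mem hmem]
                  apply ENNReal.ofReal_le_ofReal
                  have h2 : G.edist w x = (m : ℕ∞) := hmem.2
                  rw [h2]
                  simp [invPow]
                · rw [Set.indicator_of_notMem hmem]
                  exact zero_le
            _ = (t.card : ℝ≥0∞) * ENNReal.ofReal (L⁻¹ ^ m) := by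
                rw [Finset.sum_const, nsmul_eq_mul]
            _ ≤ ((M ^ m : ℕ) : ℝ≥0∞) * ENNReal.ofReal (L⁻¹ ^ m) :=
                mul_le_mul' (by exact_mod_cast htc) le_rfl
            _ = ENNReal.ofReal ((M : ℝ) ^ m * L⁻¹ ^ m) := by
                rw [ENNReal.ofReal_mul (by positivity)]
                congr 1
                rw [← ENNReal.ofReal_natCast (M ^ m)]
                norm_num
            _ ≤ ENNReal.ofReal (r ^ m) := by
                apply ENNReal.ofReal_le_ofReal
                rw [← mul_pow]
                exact pow_le_pow_left₀ (by positivity) hr m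
    _ ≤ ENNReal.ofReal (r ^ n * (1 + ε)) := by
        set b : ℕ → ℝ≥0∞ := fun m => if m < n then 0 else ENNReal.ofReal (r ^ m) with hb
        have hbk : ∀ k, b (k + n) = ENNReal.ofReal (r ^ (k + n)) := by
          intro k; simp [hb, Nat.not_lt.mpr (Nat.le_add_left n k)]
        have hsupp : Function.support b ⊆ Set.range (fun k : ℕ => k + n) := by
          intro m hm
          simp only [Function.mem_support, hb] at hm
          by_cases hmn : m < n
          · exact absurd (if_pos hmn) hm
          · exact ⟨m - n, by simpa using Nat.sub_add_cancel (Nat.not_lt.mp hmn)⟩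
        have hinj : Function.Injective (fun k : ℕ => k + n) := add_left_injective n
        apply le_of_eq
        have hsummable : Summable (fun k : ℕ => r ^ (k + n)) := by
          apply Summable.congr ((summable_geometric_of_lt_one hr0 hr1).mul_right (r ^ n))
          intro k; rw [← pow_add]
        calc ∑' m : ℕ, b m = ∑' k : ℕ, b (k + n) := (hinj.tsum_eq hsupp).symm
          _ = ∑' k : ℕ, ENNReal.ofReal (r ^ (k + n)) := tsum_congr hbk
          _ = ENNReal.ofReal (∑' k : ℕ, r ^ (k + n)) :=
              (ENNReal.ofReal_tsum_of_nonneg (fun k => by positivity) hsummable).symm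
          _ = ENNReal.ofReal (r ^ n * (1 + ε)) := by
              congr 1
              have h1r : (1 : ℝ) - r = 1 / (1 + ε) := by
                rw [hrdef]; field_simp; ring
              calc ∑' k : ℕ, r ^ (k + n) = ∑' k : ℕ, r ^ k * r ^ n := by
                    apply tsum_congr; intro k; rw [← pow_add]
                _ = (∑' k : ℕ, r ^ k) * r ^ n := tsum_mul_right
                _ = (1 - r)⁻¹ * r ^ n := by rw [tsum_geometric_of_lt_one hr0 hr1]
                _ = r ^ n * (1 + ε) := by rw [h1r]; field_simp

lemma summable_and_tsum_le {α : Type*} (h : α → ℝ) (h0 : ∀ x, 0 ≤ h x) (C : ℝ) (hC : 0 ≤ C)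
    (hb : ∑' x, ENNReal.ofReal (h x) ≤ ENNReal.ofReal C) :
    Summable h ∧ ∑' x, h x ≤ C := by
  have hne : ∑' x, ENNReal.ofReal (h x) ≠ ⊤ := (lt_of_le_of_lt hb ENNReal.ofReal_lt_top).ne
  have hsum : Summable h := by
    refine (ENNReal.summable_toReal hne).congr fun x => ?_
    exact ENNReal.toReal_ofReal (h0 x)
  refine ⟨hsum, ?_⟩
  have heq : ∑' x, h x = (∑' x, ENNReal.ofReal (h x)).toReal := by
    rw [ENNReal.tsum_toReal_eq (fun x => ENNReal.ofReal_ne_top)]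
    exact tsum_congr fun x => (ENNReal.toReal_ofReal (h0 x)).symm
  rw [heq]
  calc (∑' x, ENNReal.ofReal (h x)).toReal ≤ (ENNReal.ofReal C).toReal :=
        ENNReal.toReal_mono ENNReal.ofReal_ne_top hb
    _ = C := ENNReal.toReal_ofReal hC

lemma invPow_adj {X : Type*} {G : SimpleGraph X} {L : ℝ} (hL1 : 1 ≤ L) {x y : X}
    (hadj : G.Adj x y) (w : X) :
    L⁻¹ * invPow L (G.edist x w) ≤ invPow L (G.edist y w) := by
  have hL0 : (0 : ℝ) < L := lt_of_lt_of_le one_pos hL1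
  by_cases hd : G.edist x w = ⊤
  · have hd2 : G.edist y w = ⊤ := by
      by_contra h
      have hr := SimpleGraph.reachable_of_edist_ne_top h
      exact (SimpleGraph.edist_ne_top_iff_reachable.mpr (hadj.reachable.trans hr)) hd
    simp [invPow, hd, hd2]
  · have htri : G.edist y w ≤ 1 + G.edist x w := by
      calc G.edist y w ≤ G.edist y x + G.edist x w := SimpleGraph.edist_triangle
        _ = 1 + G.edist x w := by rw [SimpleGraph.edist_eq_one_iff_adj.mpr hadj.symm]
    have hd2 : G.edist y w ≠ ⊤ := by
      intro h
      rw [h, top_le_iff] at htri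
      rw [ENat.add_eq_top] at htri
      rcases htri with h1 | h1
      · simp at h1
      · exact hd h1
    set k := (G.edist x w).toNat with hk
    set j := (G.edist y w).toNat with hj
    have hjk : j ≤ k + 1 := by
      have h2 := htri
      rw [← ENat.coe_toNat hd, ← ENat.coe_toNat hd2, ← hk, ← hj] at h2
      have h3 : (j : ℕ∞) ≤ ((k + 1 : ℕ) : ℕ∞) := by push_cast; rw [add_comm] at h2; exact h2
      exact_mod_cast h3
    rw [invPow, invPow, if_neg hd, if_neg hd2, ← hk, ← hj]
    calc L⁻¹ * L⁻¹ ^ k = L⁻¹ ^ (k + 1) := by ring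
      _ ≤ L⁻¹ ^ j := pow_le_pow_of_le_one (by positivity) (inv_le_one_of_one_le₀ hL1) hjk

/-- the weighted smoothing `η'(x) = Σ_w L^{-d(x,w)} η(w)` of a finitely
supported probability measure on a uniformly locally finite graph. -/
theorem smoothing_of_prob_measure {X : Type*} (G : SimpleGraph X) (M : ℕ) (ε : ℝ) (hε : 0 < ε)
    (hM : ∀ x : X, (G.neighborSet x).Finite ∧ (G.neighborSet x).ncard ≤ M)
    (L : ℝ) (hL : L = max 1 ((M : ℝ) * (1 + ε⁻¹)))
    (η : X → ℝ) (s : Finset X) (hηs : ∀ x ∉ s, η x = 0)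
    (hη0 : ∀ x, 0 ≤ η x) (hη1 : ∑ x ∈ s, η x = 1)
    (η' : X → ℝ) (hη' : ∀ x, η' x = ∑ w ∈ s, invPow L (G.edist x w) * η w) :
    (∀ x, η x ≤ η' x) ∧ Summable η' ∧ (∑' x, η' x) ≤ 1 + ε ∧
    (∀ x y : X, G.Adj x y → L⁻¹ * η' x ≤ η' y ∧ η' y ≤ L * η' x) ∧
    (∀ V : Set X,
      (∑' x : V, η' (x : X)) ≤
        (if (⨅ (v ∈ V) (w ∈ {x | η x ≠ 0}), G.edist v w) = ⊤ then 0 else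
          ε ^ (⨅ (v ∈ V) (w ∈ {x | η x ≠ 0}), G.edist v w).toNat *
            (1 + ε) ^ (1 - ((⨅ (v ∈ V) (w ∈ {x | η x ≠ 0}), G.edist v w).toNat : ℤ)))) := by
  have hL1 : 1 ≤ L := hL ▸ le_max_left _ _
  have hL0 : (0 : ℝ) < L := lt_of_lt_of_le one_pos hL1
  have hML : (M : ℝ) * (1 + ε⁻¹) ≤ L := hL ▸ le_max_right _ _
  have hrM : (M : ℝ) * L⁻¹ ≤ ε / (1 + ε) := by
    have h1 : (M : ℝ) * (1 + ε) ≤ ε * L := by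
      have h2 : ε * ((M : ℝ) * (1 + ε⁻¹)) ≤ ε * L := mul_le_mul_of_nonneg_left hML hε.le
      have h3 : ε * ((M : ℝ) * (1 + ε⁻¹)) = (M : ℝ) * (ε + 1) := by
        field_simp
      nlinarith [h2, h3]
    rw [← div_eq_mul_inv, div_le_div_iff₀ hL0 (by linarith : (0:ℝ) < 1 + ε)]
    linarith
  have hinv0 : ∀ d, 0 ≤ invPow L d := invPow_nonneg hL0
  have hη'0 : ∀ x, 0 ≤ η' x := fun x => by
    rw [hη']; exact Finset.sum_nonneg fun w _ => mul_nonneg (hinv0 _) (hη0 w)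
  -- Part (1)
  have part1 : ∀ x, η x ≤ η' x := by
    intro x
    by_cases hx : x ∈ s
    · rw [hη' x]
      have hself : invPow L (G.edist x x) * η x = η x := by
        rw [SimpleGraph.edist_self]; simp [invPow]
      calc η x = invPow L (G.edist x x) * η x := hself.symm
        _ ≤ ∑ w ∈ s, invPow L (G.edist x w) * η w :=
            Finset.single_le_sum (f := fun w => invPow L (G.edist x w) * η w)
              (fun w _ => mul_nonneg (hinv0 _) (hη0 w)) hx
    · rw [hηs x hx]; exact hη'0 x
  -- the key ENNReal bound
  have key : ∀ (V : Set X) (n : ℕ),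
      (∀ v ∈ V, ∀ w ∈ s, η w ≠ 0 → (n : ℕ∞) ≤ G.edist v w) →
      ∑' x : X, V.indicator (fun x => ENNReal.ofReal (η' x)) x
        ≤ ENNReal.ofReal ((ε / (1 + ε)) ^ n * (1 + ε)) := by
    intro V n hVn
    have hexp : ∀ x, V.indicator (fun x => ENNReal.ofReal (η' x)) x
        = ∑ w ∈ s, V.indicator (fun x => ENNReal.ofReal (invPow L (G.edist w x) * η w)) x := by
      intro x
      by_cases hx : x ∈ V
      · rw [Set.indicator_of_mem hx, hη' x,
          ENNReal.ofReal_sum_of_nonneg (fun w _ => mul_nonneg (hinv0 _) (hη0 w))]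
        refine Finset.sum_congr rfl fun w _ => ?_
        rw [Set.indicator_of_mem hx, SimpleGraph.edist_comm]
      · simp [Set.indicator_of_notMem hx]
    calc ∑' x : X, V.indicator (fun x => ENNReal.ofReal (η' x)) x
        = ∑' x : X, ∑ w ∈ s,
            V.indicator (fun x => ENNReal.ofReal (invPow L (G.edist w x) * η w)) x :=
          tsum_congr hexp
      _ = ∑ w ∈ s, ∑' x : X,
            V.indicator (fun x => ENNReal.ofReal (invPow L (G.edist w x) * η w)) x :=
          Summable.tsum_finsetSum (fun w _ => ENNReal.summable)
      _ ≤ ∑ w ∈ s, ENNReal.ofReal (η w) * ENNReal.ofReal ((ε / (1 + ε)) ^ n * (1 + ε)) := by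
          apply Finset.sum_le_sum
          intro w hw
          by_cases hηw : η w = 0
          · simp [hηw]
          · have hpt : ∀ x, V.indicator (fun x => ENNReal.ofReal (invPow L (G.edist w x) * η w)) x
                = ENNReal.ofReal (η w) *
                  V.indicator (fun x => ENNReal.ofReal (invPow L (G.edist w x))) x := by
              intro x
              by_cases hx : x ∈ V
              · rw [Set.indicator_of_mem hx, Set.indicator_of_mem hx, mul_comm (invPow _ _),
                  ENNReal.ofReal_mul (hη0 w)]
              · simp [Set.indicator_of_notMem hx]
            rw [tsum_congr hpt, ENNReal.tsum_mul_left]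
            refine mul_le_mul' le_rfl ?_
            refine core_tsum_le G M hM hε hL1 hrM w V n fun v hv => ?_
            rw [SimpleGraph.edist_comm]
            exact hVn v hv w hw hηw
      _ = ENNReal.ofReal ((ε / (1 + ε)) ^ n * (1 + ε)) := by
          rw [← Finset.sum_mul, ← ENNReal.ofReal_sum_of_nonneg (fun w _ => hη0 w), hη1]
          simp
  -- summability and total mass
  have huniv := key Set.univ 0 (fun v _ w _ _ => zero_le)
  have huniv' : ∑' x : X, ENNReal.ofReal (η' x) ≤ ENNReal.ofReal (1 + ε) := by
    have h1 : ((ε / (1 + ε)) ^ 0 * (1 + ε)) = 1 + ε := by norm_num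
    rw [← h1]
    refine le_trans (le_of_eq (tsum_congr fun x => ?_)) huniv
    rw [Set.indicator_univ]
  obtain ⟨hsummable, htsum_le⟩ :=
    summable_and_tsum_le η' hη'0 (1 + ε) (by linarith) huniv'
  -- adjacency
  have hadj1 : ∀ x y : X, G.Adj x y → L⁻¹ * η' x ≤ η' y := by
    intro x y hadj
    rw [hη' x, hη' y, Finset.mul_sum]
    refine Finset.sum_le_sum fun w _ => ?_
    rw [← mul_assoc]
    exact mul_le_mul_of_nonneg_right (invPow_adj hL1 hadj w) (hη0 w)
  refine ⟨part1, hsummable, htsum_le, ?_, ?_⟩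
  · intro x y hadj
    refine ⟨hadj1 x y hadj, ?_⟩
    have h2 := hadj1 y x hadj.symm
    calc η' y = L * (L⁻¹ * η' y) := by field_simp
      _ ≤ L * η' x := mul_le_mul_of_nonneg_left h2 hL0.le
  -- part (5)
  · intro V
    set D := ⨅ (v ∈ V) (w ∈ {x | η x ≠ 0}), G.edist v w with hD
    by_cases hDtop : D = ⊤
    · rw [if_pos hDtop]
      have hzero : ∀ v ∈ V, η' v = 0 := by
        intro v hv
        rw [hη' v]
        refine Finset.sum_eq_zero fun w _ => ?_
        by_cases hηw : η w = 0
        · rw [hηw, mul_zero]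
        · have hle : D ≤ G.edist v w :=
            le_trans (iInf₂_le v hv) (iInf₂_le w hηw)
          have htop : G.edist v w = ⊤ := top_le_iff.mp (hDtop ▸ hle)
          simp [invPow, htop]
      have hzs : ∑' x : V, η' (x : X) = 0 := by
        calc ∑' x : V, η' (x : X) = ∑' _x : V, (0 : ℝ) :=
              tsum_congr fun x => hzero x x.2
          _ = 0 := tsum_zero
      rw [hzs]
    · rw [if_neg hDtop]
      set n := D.toNat with hn
      have hDn : D = (n : ℕ∞) := (ENat.coe_toNat hDtop).symm
      have hVn : ∀ v ∈ V, ∀ w ∈ s, η w ≠ 0 → (n : ℕ∞) ≤ G.edist v w := by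
        intro v hv w _ hηw
        exact le_trans (le_of_eq hDn.symm)
          (le_trans (iInf₂_le v hv) (iInf₂_le w hηw))
      have hkey := key V n hVn
      have hC : (ε / (1 + ε)) ^ n * (1 + ε) = ε ^ n * (1 + ε) ^ (1 - (n : ℤ)) := by
        rw [div_pow, zpow_sub₀ (by positivity : (1 + ε) ≠ 0), zpow_one, zpow_natCast]
        field_simp
      rw [hC] at hkey
      have hsub : ∑' x : V, ENNReal.ofReal (η' (x : X))
          = ∑' x : X, V.indicator (fun x => ENNReal.ofReal (η' x)) x :=
        tsum_subtype V (fun x => ENNReal.ofReal (η' x))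
      obtain ⟨-, hle⟩ := summable_and_tsum_le (fun x : V => η' (x : X))
        (fun x => hη'0 _) (ε ^ n * (1 + ε) ^ (1 - (n : ℤ)))
        (mul_nonneg (pow_nonneg hε.le n) (zpow_nonneg (by linarith) _))
        (by rw [hsub]; exact hkey)
      exact hle
end

section
/- Let S ⊆ X × X be a symmetric subset containing the diagonal Δ_X, and suppose d := sup_{x∈X} |S ∩ ({x} × X)| < ∞. Then there exist involutions γ₁, ..., γ_{2d-1} : X → X (bijections with γᵢ² = id) such that S equals the union of the graphs {(γᵢ(x), x) : x ∈ X} for i = 1, ..., 2d-1. -/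
lemma greedy_coloring {V : Type*} (G : SimpleGraph V) (n : ℕ)
    (h : ∀ v, (G.neighborSet v).Finite ∧ (G.neighborSet v).ncard < n) (s : Finset V) :
    ∃ c : V → Fin n, ∀ u ∈ s, ∀ v ∈ s, G.Adj u v → c u ≠ c v := by
  classical
  induction s using Finset.induction with
  | empty => exact ⟨fun v => ⟨0, Nat.lt_of_le_of_lt (Nat.zero_le _) (h v).2⟩, by simp⟩
  | @insert a s ha ih =>
    obtain ⟨c, hc⟩ := ih
    set used : Finset (Fin n) := ((h a).1.toFinset).image c with hused
    have hcard : used.card < n := by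
      calc used.card ≤ (h a).1.toFinset.card := Finset.card_image_le
        _ = (G.neighborSet a).ncard := (Set.ncard_eq_toFinset_card _ (h a).1).symm
        _ < n := (h a).2
    have hne : used ⊂ Finset.univ := by
      refine Finset.ssubset_univ_iff.mpr ?_
      intro hcontra
      rw [hcontra] at hcard
      simp [Finset.card_univ] at hcard
    obtain ⟨k, -, hk⟩ := Finset.exists_of_ssubset hne
    refine ⟨Function.update c a k, ?_⟩
    intro u hu v hv hadj
    rcases Finset.mem_insert.mp hu with rfl | hu' <;>
      rcases Finset.mem_insert.mp hv with rfl | hv'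
    · exact absurd hadj (G.irrefl)
    · have hva : v ≠ u := fun hh => ha (hh ▸ hv')
      rw [Function.update_self, Function.update_of_ne hva]
      intro hEq
      apply hk
      rw [hused]
      exact Finset.mem_image.mpr ⟨v, by simpa using hadj, hEq.symm⟩
    · have hua : u ≠ v := fun hh => ha (hh ▸ hu')
      rw [Function.update_self, Function.update_of_ne hua]
      intro hEq
      apply hk
      rw [hused]
      exact Finset.mem_image.mpr ⟨u, by simpa using (G.adj_symm hadj), hEq⟩
    · have hua : u ≠ a := fun hh => ha (hh ▸ hu')
      have hva : v ≠ a := fun hh => ha (hh ▸ hv')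
      rw [Function.update_of_ne hua, Function.update_of_ne hva]
      exact hc u hu' v hv' hadj

/-- edge coloring: a symmetric relation of uniform degree at most `d`
containing the diagonal is the union of the graphs of `2d-1` involutions. -/
theorem symmetric_relation_eq_union_involution_graphs {X : Type*} (S : Set (X × X)) (d : ℕ)
    (hsym : ∀ x y : X, (x, y) ∈ S → (y, x) ∈ S)
    (hdiag : ∀ x : X, (x, x) ∈ S)
    (hdeg : ∀ x : X, {y | (x, y) ∈ S}.Finite ∧ {y | (x, y) ∈ S}.ncard ≤ d) :
    ∃ γ : Fin (2 * d - 1) → X → X,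
      (∀ i, Function.Involutive (γ i)) ∧
      S = ⋃ i, {p : X × X | p.1 = γ i p.2} := by
  classical
  rcases Nat.lt_or_ge d 2 with hd | hd
  · -- degenerate cases d = 0 and d = 1
    interval_cases d
    · -- d = 0 : X is empty
      refine ⟨fun i _ => absurd i.2 (by simp), fun i => absurd i.2 (by simp), ?_⟩
      ext ⟨x, y⟩
      exfalso
      have h1 := (hdeg x).2
      have hx : x ∈ {y | (x, y) ∈ S} := hdiag x
      have : 0 < ({y | (x, y) ∈ S}).ncard :=
        (Set.ncard_pos (hdeg x).1).mpr ⟨x, hx⟩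
      omega
    · -- d = 1 : S is the diagonal
      refine ⟨fun _ => id, fun _ => fun x => rfl, ?_⟩
      ext ⟨x, y⟩
      simp only [Set.mem_iUnion, Set.mem_setOf_eq, id]
      constructor
      · intro hxy
        refine ⟨⟨0, by norm_num⟩, ?_⟩
        by_contra hne
        have hsub : ({x, y} : Set X) ⊆ {y' | (x, y') ∈ S} := by
          intro z hz
          rcases hz with hz | hz
          · rw [hz]; exact hdiag x
          · rw [hz]; exact hxy
        have h2 : ({x, y} : Set X).ncard ≤ ({y' | (x, y') ∈ S}).ncard :=
          Set.ncard_le_ncard hsub (hdeg x).1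
        rw [Set.ncard_pair hne] at h2
        have := (hdeg x).2
        omega
      · rintro ⟨-, h⟩
        rw [h]; exact hdiag y
  · -- main case d ≥ 2
    set n := 2 * d - 2 with hn
    -- the set of (non-diagonal) edges of S
    have hsymrel : Symmetric (fun x y => (x, y) ∈ S ∧ x ≠ y) := by
      intro x y ⟨h1, h2⟩
      exact ⟨hsym _ _ h1, h2.symm⟩
    set ES : Set (Sym2 X) := Sym2.fromRel (⟨fun _ _ h => hsymrel h⟩ : Std.Symm (fun x y => (x, y) ∈ S ∧ x ≠ y)) with hES
    -- the line graph
    set L : SimpleGraph (Sym2 X) :=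
      { Adj := fun e f => e ≠ f ∧ e ∈ ES ∧ f ∈ ES ∧ ∃ x, x ∈ e ∧ x ∈ f
        symm := ⟨by
          rintro e f ⟨h1, h2, h3, x, hx1, hx2⟩
          exact ⟨h1.symm, h3, h2, x, hx2, hx1⟩⟩
        loopless := ⟨by rintro e ⟨h1, -⟩; exact h1 rfl⟩ } with hL
    -- degree bound for the line graph
    have hLdeg : ∀ e, (L.neighborSet e).Finite ∧ (L.neighborSet e).ncard < n := by
      intro e
      by_cases he : e ∈ ES
      · induction e using Sym2.ind with
        | _ a b =>
          rw [hES, Sym2.fromRel_prop] at he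
          obtain ⟨habS, hab⟩ := he
          have hsub : L.neighborSet s(a, b) ⊆
              (fun y => s(a, y)) '' ({y | (a, y) ∈ S} \ {a, b}) ∪
              (fun y => s(b, y)) '' ({y | (b, y) ∈ S} \ {a, b}) := by
            rintro f ⟨hne, -, hfES, x, hxe, hxf⟩
            rw [Sym2.mem_iff] at hxe
            rcases hxe with hxa | hxb
            · rw [hxa] at hxf
              obtain ⟨y, rfl⟩ := Sym2.mem_iff_exists.mp hxf
              rw [hES, Sym2.fromRel_prop] at hfES
              left
              refine ⟨y, ⟨hfES.1, ?_⟩, rfl⟩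
              rintro (rfl | rfl)
              · exact hfES.2 rfl
              · exact hne rfl
            · rw [hxb] at hxf
              obtain ⟨y, rfl⟩ := Sym2.mem_iff_exists.mp hxf
              rw [hES, Sym2.fromRel_prop] at hfES
              right
              refine ⟨y, ⟨hfES.1, ?_⟩, rfl⟩
              rintro (rfl | rfl)
              · exact hne Sym2.eq_swap
              · exact hfES.2 rfl
          have hfinA : ({y | (a, y) ∈ S} \ {a, b}).Finite := (hdeg a).1.diff
          have hfinB : ({y | (b, y) ∈ S} \ {a, b}).Finite := (hdeg b).1.diff
          have hcA : ({y | (a, y) ∈ S} \ {a, b}).ncard ≤ d - 2 := by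
            have hsub2 : ({a, b} : Set X) ⊆ {y | (a, y) ∈ S} := by
              rintro z (hz | hz) <;> rw [hz]
              · exact hdiag a
              · exact habS
            rw [Set.ncard_diff hsub2 (Set.toFinite _), Set.ncard_pair hab]
            have := (hdeg a).2
            omega
          have hcB : ({y | (b, y) ∈ S} \ {a, b}).ncard ≤ d - 2 := by
            have hsub2 : ({a, b} : Set X) ⊆ {y | (b, y) ∈ S} := by
              rintro z (hz | hz) <;> rw [hz]
              · exact hsym _ _ habS
              · exact hdiag b
            rw [Set.ncard_diff hsub2 (Set.toFinite _), Set.ncard_pair hab]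
            have := (hdeg b).2
            omega
          have hfin : (L.neighborSet s(a, b)).Finite :=
            ((hfinA.image _).union (hfinB.image _)).subset hsub
          refine ⟨hfin, ?_⟩
          have h1 : (L.neighborSet s(a, b)).ncard ≤
              ((fun y => s(a, y)) '' ({y | (a, y) ∈ S} \ {a, b})).ncard +
              ((fun y => s(b, y)) '' ({y | (b, y) ∈ S} \ {a, b})).ncard := by
            refine le_trans (Set.ncard_le_ncard hsub ?_) (Set.ncard_union_le _ _)
            exact (hfinA.image _).union (hfinB.image _)
          have h2 := Set.ncard_image_le (s := {y | (a, y) ∈ S} \ {a, b})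
            (f := fun y => s(a, y)) hfinA
          have h3 := Set.ncard_image_le (s := {y | (b, y) ∈ S} \ {a, b})
            (f := fun y => s(b, y)) hfinB
          omega
      · have : L.neighborSet e = ∅ := by
          ext f
          simp only [SimpleGraph.mem_neighborSet, Set.mem_empty_iff_false, iff_false]
          rintro ⟨-, h2, -⟩
          exact he h2
        rw [this]
        simp only [Set.finite_empty, Set.ncard_empty, true_and]
        omega
    -- a proper coloring of the line graph by compactness + greedy
    have hcolor : Nonempty (L →g (⊤ : SimpleGraph (Fin n))) := by
      apply SimpleGraph.nonempty_hom_of_forall_finite_subgraph_hom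
      intro G' hv
      haveI := hv.fintype
      have hdeg' : ∀ v : G'.verts, (G'.coe.neighborSet v).Finite ∧
          (G'.coe.neighborSet v).ncard < n := by
        intro v
        have hsub : G'.neighborSet ↑v ⊆ L.neighborSet ↑v := G'.neighborSet_subset ↑v
        have hfin : (G'.neighborSet ↑v).Finite := (hLdeg ↑v).1.subset hsub
        haveI : Finite (G'.neighborSet ↑v) := hfin.to_subtype
        haveI : Finite (G'.coe.neighborSet v) :=
          Finite.of_equiv _ (SimpleGraph.Subgraph.coeNeighborSetEquiv v).symm
        refine ⟨Set.toFinite _, ?_⟩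
        have hcardEq : (G'.coe.neighborSet v).ncard = (G'.neighborSet ↑v).ncard := by
          rw [← Nat.card_coe_set_eq, ← Nat.card_coe_set_eq]
          exact Nat.card_congr (SimpleGraph.Subgraph.coeNeighborSetEquiv v)
        rw [hcardEq]
        exact lt_of_le_of_lt (Set.ncard_le_ncard hsub (hLdeg ↑v).1) (hLdeg ↑v).2
      have hex := greedy_coloring G'.coe n hdeg' Finset.univ
      exact ⟨hex.choose, fun {u v} hadj =>
        (SimpleGraph.top_adj _ _).mpr
          (hex.choose_spec u (Finset.mem_univ u) v (Finset.mem_univ v) hadj)⟩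
    obtain ⟨C⟩ := hcolor
    -- uniqueness of the neighbor of a given color
    set P : Fin n → X → X → Prop :=
      fun i x y => y ≠ x ∧ (x, y) ∈ S ∧ C s(x, y) = i with hP
    have hESmem : ∀ {x y : X}, y ≠ x → (x, y) ∈ S → s(x, y) ∈ ES := by
      intro x y h1 h2
      rw [hES, Sym2.fromRel_prop]
      exact ⟨h2, fun hh => h1 hh.symm⟩
    have huniq : ∀ i x y z, P i x y → P i x z → y = z := by
      intro i x y z ⟨hy1, hy2, hy3⟩ ⟨hz1, hz2, hz3⟩
      by_contra hyz
      have hef : s(x, y) ≠ s(x, z) := fun hh => hyz (Sym2.congr_right.mp hh)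
      have hadj : L.Adj s(x, y) s(x, z) :=
        ⟨hef, hESmem hy1 hy2, hESmem hz1 hz2, x, Sym2.mem_mk_left _ _, Sym2.mem_mk_left _ _⟩
      have := C.map_rel hadj
      rw [SimpleGraph.top_adj] at this
      exact this (hy3.trans hz3.symm)
    set γ' : Fin n → X → X := fun i x =>
      if h : ∃ y, P i x y then h.choose else x with hγ'
    have hγ'neg : ∀ i x, ¬(∃ y, P i x y) → γ' i x = x := by
      intro i x h
      show (if h : ∃ y, P i x y then h.choose else x) = x
      rw [dif_neg h]
    have hγ'val : ∀ i x y, P i x y → γ' i x = y := by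
      intro i x y hy
      show (if h : ∃ y, P i x y then h.choose else x) = y
      rw [dif_pos ⟨y, hy⟩]
      exact huniq i x _ y (Exists.choose_spec ⟨y, hy⟩) hy
    have hγ'inv : ∀ i, Function.Involutive (γ' i) := by
      intro i x
      by_cases h : ∃ y, P i x y
      · have hy := h.choose_spec
        have h1 : γ' i x = h.choose := hγ'val i x _ hy
        rw [h1]
        apply hγ'val
        refine ⟨fun hh => hy.1 hh.symm, hsym _ _ hy.2.1, ?_⟩
        rw [Sym2.eq_swap]
        exact hy.2.2
      · have h1 : γ' i x = x := hγ'neg i x h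
        rw [h1, h1]
    -- assemble the involutions
    have hnlt : n < 2 * d - 1 := by omega
    set Γ : Fin (2 * d - 1) → X → X :=
      fun j => if h : (j : ℕ) < n then γ' ⟨j, h⟩ else id with hΓ
    have hΓpos : ∀ (j : Fin (2 * d - 1)) (h : (j : ℕ) < n), Γ j = γ' ⟨j, h⟩ :=
      fun j h => dif_pos h
    have hΓneg : ∀ (j : Fin (2 * d - 1)), ¬((j : ℕ) < n) → Γ j = id :=
      fun j h => dif_neg h
    refine ⟨Γ, ?_, ?_⟩
    · intro j
      by_cases h : (j : ℕ) < n
      · rw [hΓpos j h]; exact hγ'inv _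
      · rw [hΓneg j h]; exact fun x => rfl
    · ext ⟨x, y⟩
      simp only [Set.mem_iUnion, Set.mem_setOf_eq]
      constructor
      · intro hxy
        by_cases hxe : x = y
        · refine ⟨⟨n, hnlt⟩, ?_⟩
          rw [hΓneg ⟨n, hnlt⟩ (by simp)]
          exact hxe
        · set i := C s(y, x) with hi
          refine ⟨⟨(i : ℕ), lt_trans i.isLt hnlt⟩, ?_⟩
          rw [hΓpos ⟨(i : ℕ), lt_trans i.isLt hnlt⟩ (by simpa using i.isLt)]
          have hPi : P i y x := ⟨hxe, hsym _ _ hxy, by rw [hi]⟩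
          have := hγ'val i y x hPi
          simp only [Fin.eta] at this ⊢
          exact this.symm
      · rintro ⟨j, hj⟩
        by_cases h : (j : ℕ) < n
        · rw [hΓpos j h] at hj
          set i : Fin n := ⟨j, h⟩
          by_cases hex : ∃ z, P i y z
          · have h1 : γ' i y = hex.choose := hγ'val i y _ hex.choose_spec
            have hspec := hex.choose_spec
            rw [h1] at hj
            rw [hj]
            exact hsym _ _ hspec.2.1
          · rw [hγ'neg i y hex] at hj
            rw [hj]
            exact hdiag y
        · rw [hΓneg j h] at hj
          rw [hj]
          exact hdiag y
end

section
/- A coarse structure ℰ on a set X is generated by a single entourage (i.e., ℰ is the smallest coarse structure containing some E ⊆ X × X) if and only if ℰ equals the bounded-distance coarse structure of the graph metric of some graph on X. -/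
open scoped ENNReal

/-- A coarse structure on `X`: a downward closed, directed collection of subsets of
`X × X` containing the diagonal, closed under composition and inverse. -/
def IsCoarseStructure {X : Type*} (𝓔 : Set (Set (X × X))) : Prop :=
  (∀ A ∈ 𝓔, ∀ B ⊆ A, B ∈ 𝓔) ∧
  (∀ A ∈ 𝓔, ∀ B ∈ 𝓔, ∃ C ∈ 𝓔, A ⊆ C ∧ B ⊆ C) ∧
  {p : X × X | p.1 = p.2} ∈ 𝓔 ∧
  (∀ A ∈ 𝓔, ∀ B ∈ 𝓔, {p : X × X | ∃ y, (p.1, y) ∈ A ∧ (y, p.2) ∈ B} ∈ 𝓔) ∧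
  (∀ A ∈ 𝓔, {p : X × X | (p.2, p.1) ∈ A} ∈ 𝓔)

/-- Iterated composition of a relation. -/
private def compPow {X : Type*} (A : Set (X × X)) : ℕ → Set (X × X)
  | 0 => {p | p.1 = p.2}
  | n+1 => {p | ∃ y, (p.1, y) ∈ A ∧ (y, p.2) ∈ compPow A n}

private lemma edist_le_iff_compPow {X : Type*} (G : SimpleGraph X) :
    ∀ (n : ℕ) (x z : X),
      G.edist x z ≤ (n : ℕ∞) ↔ (x, z) ∈ compPow {p : X × X | G.edist p.1 p.2 ≤ 1} n := by
  intro n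
  induction n with
  | zero =>
    intro x z
    simp [compPow, Nat.cast_zero, le_zero_iff, SimpleGraph.edist_eq_zero_iff]
  | succ n ih =>
    intro x z
    constructor
    · intro h
      have hne : G.edist x z ≠ ⊤ := by
        intro ht; rw [ht] at h; exact (ENat.coe_ne_top (n+1)) (top_le_iff.mp h)
      obtain ⟨p, hp⟩ := SimpleGraph.exists_walk_of_edist_ne_top hne
      cases p with
      | nil =>
        refine ⟨x, ?_, ?_⟩
        · simp [SimpleGraph.edist_self]
        · rw [← ih]
          simp [SimpleGraph.edist_self]
      | cons hadj q =>
        rename_i y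
        refine ⟨y, ?_, ?_⟩
        · simp only [Set.mem_setOf_eq]
          exact le_of_eq (SimpleGraph.edist_eq_one_iff_adj.mpr hadj)
        · rw [← ih]
          have hq : G.edist y z ≤ (q.length : ℕ∞) := SimpleGraph.edist_le q
          refine hq.trans ?_
          rw [← hp, SimpleGraph.Walk.length_cons] at h
          have h2 : q.length + 1 ≤ n + 1 := by exact_mod_cast h
          exact_mod_cast Nat.le_of_succ_le_succ h2
    · rintro ⟨y, h1, h2⟩
      have h2' : G.edist y z ≤ (n : ℕ∞) := (ih y z).mpr h2
      calc G.edist x z ≤ G.edist x y + G.edist y z := SimpleGraph.edist_triangle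
        _ ≤ 1 + (n : ℕ∞) := add_le_add h1 h2'
        _ = ((n + 1 : ℕ) : ℕ∞) := by push_cast; ring

private lemma compPow_mem {X : Type*} {𝓕 : Set (Set (X × X))} (h : IsCoarseStructure 𝓕)
    {A : Set (X × X)} (hA : A ∈ 𝓕) : ∀ n, compPow A n ∈ 𝓕 := by
  obtain ⟨hdown, hdir, hdiag, hcomp, hinv⟩ := h
  intro n
  induction n with
  | zero => exact hdiag
  | succ n ih => exact hcomp A hA _ ih

private lemma union_mem {X : Type*} {𝓕 : Set (Set (X × X))} (h : IsCoarseStructure 𝓕)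
    {A B : Set (X × X)} (hA : A ∈ 𝓕) (hB : B ∈ 𝓕) : A ∪ B ∈ 𝓕 := by
  obtain ⟨C, hC, hAC, hBC⟩ := h.2.1 A hA B hB
  exact h.1 C hC _ (Set.union_subset hAC hBC)

/-- The bounded-distance coarse structure of a graph metric is indeed a coarse structure. -/
private lemma graph_coarse {X : Type*} (G : SimpleGraph X) :
    IsCoarseStructure {S : Set (X × X) | ∃ n : ℕ, ∀ p ∈ S, G.edist p.1 p.2 ≤ (n : ℕ∞)} := by
  refine ⟨?_, ?_, ?_, ?_, ?_⟩
  · rintro A ⟨n, hn⟩ B hBA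
    exact ⟨n, fun p hp => hn p (hBA hp)⟩
  · rintro A ⟨n, hn⟩ B ⟨m, hm⟩
    refine ⟨A ∪ B, ⟨max n m, ?_⟩, Set.subset_union_left, Set.subset_union_right⟩
    rintro p (hp | hp)
    · exact (hn p hp).trans (by exact_mod_cast Nat.le_max_left n m)
    · exact (hm p hp).trans (by exact_mod_cast Nat.le_max_right n m)
  · refine ⟨0, fun p hp => ?_⟩
    simp only [Set.mem_setOf_eq] at hp
    simp [hp, SimpleGraph.edist_self]
  · rintro A ⟨n, hn⟩ B ⟨m, hm⟩
    refine ⟨n + m, ?_⟩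
    rintro p ⟨y, hy1, hy2⟩
    calc G.edist p.1 p.2 ≤ G.edist p.1 y + G.edist y p.2 := SimpleGraph.edist_triangle
      _ ≤ (n : ℕ∞) + (m : ℕ∞) := add_le_add (hn (p.1, y) hy1) (hm (y, p.2) hy2)
      _ = ((n + m : ℕ) : ℕ∞) := by push_cast; ring
  · rintro A ⟨n, hn⟩
    refine ⟨n, fun p hp => ?_⟩
    rw [SimpleGraph.edist_comm]
    exact hn (p.2, p.1) hp

/-- a coarse structure is generated by a single entourage iff it is the
bounded-distance coarse structure of the graph metric of some graph on `X`. -/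
theorem singly_generated_iff_graph_metric {X : Type*} (𝓔 : Set (Set (X × X)))
    (h𝓔 : IsCoarseStructure 𝓔) :
    (∃ E₀ : Set (X × X), E₀ ∈ 𝓔 ∧
        ∀ 𝓕 : Set (Set (X × X)), IsCoarseStructure 𝓕 → E₀ ∈ 𝓕 → 𝓔 ⊆ 𝓕) ↔
    (∃ G : SimpleGraph X, 𝓔 = {S | ∃ n : ℕ, ∀ p ∈ S, G.edist p.1 p.2 ≤ (n : ℕ∞)}) := by
  constructor
  · rintro ⟨E₀, hE₀, hmin⟩
    set G : SimpleGraph X :=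
      { Adj := fun x y => x ≠ y ∧ ((x, y) ∈ E₀ ∨ (y, x) ∈ E₀)
        symm := ⟨fun x y ⟨hne, h⟩ => ⟨hne.symm, h.symm⟩⟩
        loopless := ⟨fun x ⟨hne, _⟩ => hne rfl⟩ } with hG
    refine ⟨G, le_antisymm ?_ ?_⟩
    · -- 𝓔 ⊆ 𝓕_G, by minimality
      apply hmin _ (graph_coarse G)
      refine ⟨1, fun p hp => ?_⟩
      by_cases hp12 : p.1 = p.2
      · simp [hp12, SimpleGraph.edist_self]
      · exact le_of_eq (SimpleGraph.edist_eq_one_iff_adj.mpr ⟨hp12, Or.inl hp⟩)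
    · -- 𝓕_G ⊆ 𝓔
      have h𝓔' := h𝓔
      obtain ⟨hdown, hdir, hdiag, hcomp, hinv⟩ := h𝓔
      have hE₁ : {p : X × X | G.edist p.1 p.2 ≤ 1} ∈ 𝓔 := by
        have hinv' : {p : X × X | (p.2, p.1) ∈ E₀} ∈ 𝓔 := hinv E₀ hE₀
        have hu : ({p : X × X | p.1 = p.2} ∪ E₀) ∪ {p : X × X | (p.2, p.1) ∈ E₀} ∈ 𝓔 :=
          union_mem h𝓔' (union_mem h𝓔' hdiag hE₀) hinv'
        refine hdown _ hu _ ?_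
        intro p hp
        simp only [Set.mem_setOf_eq] at hp
        rcases eq_or_ne (G.edist p.1 p.2) 0 with h0 | h0
        · exact Or.inl (Or.inl (SimpleGraph.edist_eq_zero_iff.mp h0))
        · have h1 : G.edist p.1 p.2 = 1 :=
            le_antisymm hp (ENat.one_le_iff_ne_zero.mpr h0)
          rcases (SimpleGraph.edist_eq_one_iff_adj.mp h1).2 with h | h
          · exact Or.inl (Or.inr h)
          · exact Or.inr h
      rintro S ⟨n, hn⟩
      refine hdown _ (compPow_mem h𝓔' hE₁ n) S ?_
      intro p hp
      exact (edist_le_iff_compPow G n p.1 p.2).mp (hn p hp)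
  · rintro ⟨G, rfl⟩
    refine ⟨{p : X × X | G.edist p.1 p.2 ≤ 1}, ⟨1, fun p hp => by exact_mod_cast hp⟩, ?_⟩
    rintro 𝓕 h𝓕 hE₀ S ⟨n, hn⟩
    refine h𝓕.1 _ (compPow_mem h𝓕 hE₀ n) S ?_
    intro p hp
    exact (edist_le_iff_compPow G n p.1 p.2).mp (hn p hp)
end

section
/- A coarse structure ℰ on a set X is countably generated if and only if it comes from an extended metric, i.e., there exists a metric d : X × X → [0,∞] satisfying the metric axioms such that ℰ = {S ⊆ X×X : sup_{(x,y)∈S} d(x,y) < ∞}. -/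
open scoped ENNReal NNReal

namespace CGAux

variable {X : Type*}

/-- A chain of total cost `n` from `x` to `y`, where a single step across `A k`
costs `k + 1`. -/
inductive Chain (A : ℕ → Set (X × X)) : ℕ → X → X → Prop
  | refl (x : X) : Chain A 0 x x
  | step {k n : ℕ} {x y z : X} (h : (x, y) ∈ A k) (h' : Chain A n y z) :
      Chain A (k + 1 + n) x z

/-- The chain metric associated to the family `A`. -/
noncomputable def cdist (A : ℕ → Set (X × X)) (x y : X) : ℝ≥0∞ :=
  ⨅ (n : ℕ) (_ : Chain A n x y), (n : ℝ≥0∞)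

lemma Chain.append {A : ℕ → Set (X × X)} {n m : ℕ} {x y z : X}
    (h : Chain A n x y) (h' : Chain A m y z) : Chain A (n + m) x z := by
  induction h with
  | refl x => simpa using h'
  | @step k n x y z hk h'' ih =>
      have := Chain.step hk (ih h')
      have e : k + 1 + (n + m) = k + 1 + n + m := by omega
      rwa [e] at this

lemma Chain.symm {A : ℕ → Set (X × X)} (hA : ∀ k, ∀ p ∈ A k, (p.2, p.1) ∈ A k)
    {n : ℕ} {x y : X} (h : Chain A n x y) : Chain A n y x := by
  induction h with
  | refl x => exact .refl x
  | @step k n x y z hk h' ih =>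
      have h1 : Chain A (k + 1 + 0) y x :=
        Chain.step (hA k (x, y) hk) (Chain.refl x)
      have := ih.append h1
      have e : n + (k + 1 + 0) = k + 1 + n := by omega
      rwa [e] at this

lemma Chain.eq_of_zero {A : ℕ → Set (X × X)} {n : ℕ} {x y : X}
    (h : Chain A n x y) (hn : n = 0) : x = y := by
  cases h with
  | refl => rfl
  | step hk h' => omega

lemma cdist_le {A : ℕ → Set (X × X)} {n : ℕ} {x y : X} (h : Chain A n x y) :
    cdist A x y ≤ (n : ℝ≥0∞) :=
  iInf₂_le n h

lemma cdist_eq_top {A : ℕ → Set (X × X)} {x y : X} (h : ∀ n, ¬ Chain A n x y) :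
    cdist A x y = ⊤ := by
  simp [cdist, h]

lemma exists_chain_cdist {A : ℕ → Set (X × X)} {x y : X} (h : ∃ n, Chain A n x y) :
    ∃ n, Chain A n x y ∧ cdist A x y = (n : ℝ≥0∞) := by
  classical
  refine ⟨Nat.find h, Nat.find_spec h, le_antisymm (cdist_le (Nat.find_spec h)) ?_⟩
  exact le_iInf₂ fun n hn => by exact_mod_cast Nat.find_min' h hn

lemma exists_chain_le {A : ℕ → Set (X × X)} {x y : X} {N : ℕ}
    (h : cdist A x y ≤ (N : ℝ≥0∞)) : ∃ n ≤ N, Chain A n x y := by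
  by_cases hc : ∃ n, Chain A n x y
  · obtain ⟨n, hn, he⟩ := exists_chain_cdist hc
    rw [he] at h
    exact ⟨n, by exact_mod_cast h, hn⟩
  · rw [cdist_eq_top (not_exists.mp hc)] at h
    exact absurd (top_le_iff.mp h) (by simp)

lemma cdist_triangle (A : ℕ → Set (X × X)) (x y z : X) :
    cdist A x z ≤ cdist A x y + cdist A y z := by
  by_cases h1 : ∃ n, Chain A n x y
  · by_cases h2 : ∃ m, Chain A m y z
    · obtain ⟨n, hn, e1⟩ := exists_chain_cdist h1
      obtain ⟨m, hm, e2⟩ := exists_chain_cdist h2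
      rw [e1, e2]
      calc cdist A x z ≤ ((n + m : ℕ) : ℝ≥0∞) := cdist_le (hn.append hm)
        _ = (n : ℝ≥0∞) + (m : ℝ≥0∞) := by push_cast; ring
    · rw [cdist_eq_top (not_exists.mp h2)]; simp
  · rw [cdist_eq_top (not_exists.mp h1)]; simp

lemma cdist_symm {A : ℕ → Set (X × X)} (hA : ∀ k, ∀ p ∈ A k, (p.2, p.1) ∈ A k)
    (x y : X) : cdist A x y = cdist A y x :=
  le_antisymm (le_iInf₂ fun _ hn => cdist_le (hn.symm hA))
    (le_iInf₂ fun _ hn => cdist_le (hn.symm hA))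

/-- Symmetrization of a family, with the diagonal added. -/
def symFam (E : ℕ → Set (X × X)) (k : ℕ) : Set (X × X) :=
  (E k ∪ {p | (p.2, p.1) ∈ E k}) ∪ {p | p.1 = p.2}

lemma symFam_symm (E : ℕ → Set (X × X)) :
    ∀ k, ∀ p ∈ symFam E k, (p.2, p.1) ∈ symFam E k := by
  rintro k ⟨a, b⟩ ((h | h) | h)
  · exact Or.inl (Or.inr h)
  · exact Or.inl (Or.inl h)
  · exact Or.inr (h.symm)

lemma symFam_diag (E : ℕ → Set (X × X)) (k : ℕ) (x : X) : (x, x) ∈ symFam E k :=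
  Or.inr rfl

/-- Union of the first `N + 1` members of the family. -/
def bigU (A : ℕ → Set (X × X)) : ℕ → Set (X × X)
  | 0 => A 0
  | N + 1 => bigU A N ∪ A (N + 1)

lemma subset_bigU (A : ℕ → Set (X × X)) {k N : ℕ} (h : k ≤ N) : A k ⊆ bigU A N := by
  induction N with
  | zero =>
      have hk : k = 0 := by omega
      subst hk; exact subset_rfl
  | succ N ih =>
      rcases Nat.lt_or_ge k (N + 1) with h' | h'
      · exact (ih (by omega)).trans Set.subset_union_left
      · have hk : k = N + 1 := by omega
        subst hk; exact Set.subset_union_right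

/-- `n`-fold composition of a relation with itself (starting from the diagonal). -/
def iterComp (U : Set (X × X)) : ℕ → Set (X × X)
  | 0 => {p | p.1 = p.2}
  | n + 1 => {p | ∃ y, (p.1, y) ∈ U ∧ (y, p.2) ∈ iterComp U n}

lemma iterComp_succ_mono {U : Set (X × X)} (hU : ∀ x : X, (x, x) ∈ U) (n : ℕ) :
    iterComp U n ⊆ iterComp U (n + 1) := by
  induction n with
  | zero =>
      rintro ⟨a, b⟩ (h : a = b)
      exact ⟨a, hU a, h⟩
  | succ n ih =>
      rintro ⟨a, b⟩ ⟨m, hm, hr⟩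
      exact ⟨m, hm, ih hr⟩

lemma iterComp_mono {U : Set (X × X)} (hU : ∀ x : X, (x, x) ∈ U) {n m : ℕ}
    (h : n ≤ m) : iterComp U n ⊆ iterComp U m := by
  induction m with
  | zero =>
      have hn : n = 0 := by omega
      subst hn; exact subset_rfl
  | succ m ih =>
      rcases Nat.lt_or_ge n (m + 1) with h' | h'
      · exact (ih (by omega)).trans (iterComp_succ_mono hU m)
      · have hn : n = m + 1 := by omega
        subst hn; exact subset_rfl

lemma Chain.mem_iterComp {A : ℕ → Set (X × X)} (hd : ∀ x : X, (x, x) ∈ A 0)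
    {n : ℕ} {x y : X} (h : Chain A n x y) :
    ∀ N, n ≤ N → (x, y) ∈ iterComp (bigU A N) n := by
  induction h with
  | refl x => intro N _; exact rfl
  | @step k n x y z hk h' ih =>
      intro N hN
      have hUd : ∀ w : X, (w, w) ∈ bigU A N :=
        fun w => subset_bigU A (Nat.zero_le N) (hd w)
      have h1 : (x, z) ∈ iterComp (bigU A N) (n + 1) :=
        ⟨y, subset_bigU A (by omega) hk, ih N (by omega)⟩
      exact iterComp_mono hUd (by omega) h1

lemma union_mem {𝓔 : Set (Set (X × X))} (h : IsCoarseStructure 𝓔)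
    {A B : Set (X × X)} (hA : A ∈ 𝓔) (hB : B ∈ 𝓔) : A ∪ B ∈ 𝓔 := by
  obtain ⟨C, hC, h1, h2⟩ := h.2.1 A hA B hB
  exact h.1 C hC _ (Set.union_subset h1 h2)

lemma iterComp_mem {𝓔 : Set (Set (X × X))} (h : IsCoarseStructure 𝓔)
    {U : Set (X × X)} (hU : U ∈ 𝓔) : ∀ n, iterComp U n ∈ 𝓔 := by
  intro n
  induction n with
  | zero => exact h.2.2.1
  | succ n ih => exact h.2.2.2.1 U hU _ ih

end CGAux

/-- a coarse structure is countably generated iff it comes from an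
extended metric. -/
theorem countably_generated_iff_extended_metric {X : Type*} (𝓔 : Set (Set (X × X)))
    (h𝓔 : IsCoarseStructure 𝓔) :
    (∃ E : ℕ → Set (X × X), (∀ n, E n ∈ 𝓔) ∧
        ∀ 𝓕 : Set (Set (X × X)), IsCoarseStructure 𝓕 → (∀ n, E n ∈ 𝓕) → 𝓔 ⊆ 𝓕) ↔
    (∃ d : X → X → ℝ≥0∞, (∀ x y, d x y = 0 ↔ x = y) ∧ (∀ x y, d x y = d y x) ∧
        (∀ x y z, d x z ≤ d x y + d y z) ∧
        𝓔 = {S | ∃ C : ℝ≥0, ∀ p ∈ S, d p.1 p.2 ≤ (C : ℝ≥0∞)}) := by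
  constructor
  · rintro ⟨E, hE, hmin⟩
    set A := CGAux.symFam E with hA
    have hAsym : ∀ k, ∀ p ∈ A k, (p.2, p.1) ∈ A k := CGAux.symFam_symm E
    have hAd : ∀ x : X, (x, x) ∈ A 0 := CGAux.symFam_diag E 0
    refine ⟨CGAux.cdist A, ?_, fun x y => CGAux.cdist_symm hAsym x y,
      CGAux.cdist_triangle A, ?_⟩
    · intro x y
      constructor
      · intro h
        by_cases hc : ∃ n, CGAux.Chain A n x y
        · obtain ⟨n, hn, he⟩ := CGAux.exists_chain_cdist hc
          rw [h] at he
          have hn0 : n = 0 := by exact_mod_cast he.symm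
          exact hn.eq_of_zero hn0
        · rw [CGAux.cdist_eq_top (not_exists.mp hc)] at h
          simp at h
      · rintro rfl
        exact le_antisymm (by simpa using CGAux.cdist_le (CGAux.Chain.refl x)) zero_le
    · have h𝓕 : IsCoarseStructure
          {S : Set (X × X) | ∃ C : ℝ≥0, ∀ p ∈ S, CGAux.cdist A p.1 p.2 ≤ (C : ℝ≥0∞)} := by
        refine ⟨?_, ?_, ?_, ?_, ?_⟩
        · rintro S ⟨C, hC⟩ B hB
          exact ⟨C, fun p hp => hC p (hB hp)⟩
        · rintro S ⟨C1, h1⟩ T ⟨C2, h2⟩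
          refine ⟨S ∪ T, ⟨C1 ⊔ C2, ?_⟩, Set.subset_union_left, Set.subset_union_right⟩
          rintro p (hp | hp)
          · exact (h1 p hp).trans (by exact_mod_cast le_sup_left)
          · exact (h2 p hp).trans (by exact_mod_cast le_sup_right)
        · refine ⟨0, ?_⟩
          rintro ⟨a, b⟩ (h : a = b)
          subst h
          simpa using CGAux.cdist_le (CGAux.Chain.refl a)
        · rintro S ⟨C1, h1⟩ T ⟨C2, h2⟩
          refine ⟨C1 + C2, ?_⟩
          rintro ⟨a, b⟩ ⟨m, hm1, hm2⟩
          calc CGAux.cdist A a b ≤ CGAux.cdist A a m + CGAux.cdist A m b :=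
                CGAux.cdist_triangle A a m b
            _ ≤ (C1 : ℝ≥0∞) + (C2 : ℝ≥0∞) := add_le_add (h1 _ hm1) (h2 _ hm2)
            _ = ((C1 + C2 : ℝ≥0) : ℝ≥0∞) := by push_cast; ring
        · rintro S ⟨C, hC⟩
          refine ⟨C, ?_⟩
          rintro ⟨a, b⟩ hab
          rw [CGAux.cdist_symm hAsym]
          exact hC (b, a) hab
      have hE𝓕 : ∀ n, E n ∈
          {S : Set (X × X) | ∃ C : ℝ≥0, ∀ p ∈ S, CGAux.cdist A p.1 p.2 ≤ (C : ℝ≥0∞)} := by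
        intro n
        refine ⟨(n : ℝ≥0) + 1, fun p hp => ?_⟩
        have hc : CGAux.Chain A (n + 1 + 0) p.1 p.2 :=
          CGAux.Chain.step (Or.inl (Or.inl hp)) (CGAux.Chain.refl _)
        have h2 := CGAux.cdist_le hc
        exact le_trans h2 (le_of_eq (by push_cast; ring))
      apply Set.Subset.antisymm
      · exact hmin _ h𝓕 hE𝓕
      · rintro S ⟨C, hC⟩
        set N := ⌈C⌉₊ with hN
        have hsym : ∀ k, A k ∈ 𝓔 := fun k =>
          CGAux.union_mem h𝓔 (CGAux.union_mem h𝓔 (hE k) (h𝓔.2.2.2.2 _ (hE k))) h𝓔.2.2.1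
        have hBig : ∀ M, CGAux.bigU A M ∈ 𝓔 := by
          intro M
          induction M with
          | zero => exact hsym 0
          | succ M ih => exact CGAux.union_mem h𝓔 ih (hsym (M + 1))
        have hIter : CGAux.iterComp (CGAux.bigU A N) N ∈ 𝓔 :=
          CGAux.iterComp_mem h𝓔 (hBig N) N
        refine h𝓔.1 _ hIter S ?_
        rintro ⟨a, b⟩ hab
        have hd : CGAux.cdist A a b ≤ (N : ℝ≥0∞) :=
          (hC _ hab).trans (by exact_mod_cast Nat.le_ceil C)
        obtain ⟨m, hm, hchain⟩ := CGAux.exists_chain_le hd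
        have hmem := hchain.mem_iterComp hAd N hm
        exact CGAux.iterComp_mono
          (fun w => CGAux.subset_bigU A (Nat.zero_le N) (hAd w)) hm hmem
  · rintro ⟨d, hd0, hdsym, hdtri, hEq⟩
    refine ⟨fun n => {p | d p.1 p.2 ≤ (n : ℝ≥0∞)}, ?_, ?_⟩
    · intro n
      rw [hEq]
      exact ⟨(n : ℝ≥0), fun p hp => by exact_mod_cast hp⟩
    · intro 𝓕 h𝓕 hEF S hS
      rw [hEq] at hS
      obtain ⟨C, hC⟩ := hS
      refine h𝓕.1 _ (hEF ⌈C⌉₊) S ?_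
      intro p hp
      exact (hC p hp).trans (by exact_mod_cast Nat.le_ceil C)
end

section
/- Every uniformly locally finite coarse space (X, ℰ) can be realized as the Schreier coarse structure of a group action: there exists a group Γ generated by involutions acting on X such that ℰ is the coarse structure generated by {graph(γ) : γ ∈ Γ}, where graph(γ) = {(γx, x) : x ∈ X}. -/
open Set

private lemma sym2_pair_eq {X : Type*} {x a b : X} (h : s(x, a) = s(x, b)) : a = b := by
  rcases Sym2.eq_iff.mp h with ⟨-, h2⟩ | ⟨h1, h2⟩
  · exact h2
  · rw [h2, h1]

lemma exists_involutions_cover {X : Type*} (R : Set (X × X))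
    (hsymm : ∀ p ∈ R, (p.2, p.1) ∈ R) (M : ℕ)
    (hfin : ∀ x : X, {y | (y, x) ∈ R}.Finite ∧ {y | (y, x) ∈ R}.ncard ≤ M) :
    ∃ (n : ℕ) (t : Fin n → Equiv.Perm X),
      (∀ i, Function.Involutive (t i)) ∧
      (∀ i, {p : X × X | p.1 = t i p.2} ⊆ R ∪ {p | p.1 = p.2}) ∧
      R ⊆ {p : X × X | p.1 = p.2} ∪ ⋃ i, {p : X × X | p.1 = t i p.2} := by
  classical
  set N := 2 * M + 1 with hN
  set E : Set (Sym2 X) := {e | ∃ a b : X, a ≠ b ∧ (a, b) ∈ R ∧ e = s(a, b)} with hE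
  set 𝒮 : Set (Set (Sym2 X × Fin N)) := {P |
    (∀ q ∈ P, q.1 ∈ E) ∧
    (∀ q ∈ P, ∀ q' ∈ P, q.1 = q'.1 → q.2 = q'.2) ∧
    (∀ q ∈ P, ∀ q' ∈ P, q.2 = q'.2 → q.1 ≠ q'.1 → ∀ z, z ∈ q.1 → z ∉ q'.1)} with h𝒮
  have hchainub : ∀ c ⊆ 𝒮, IsChain (· ⊆ ·) c → c.Nonempty →
      ∃ ub ∈ 𝒮, ∀ s ∈ c, s ⊆ ub := by
    intro c hc hchain _
    refine ⟨⋃₀ c, ⟨?_, ?_, ?_⟩, fun s hs => subset_sUnion_of_mem hs⟩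
    · rintro q ⟨P₁, hP₁, hq⟩
      exact (hc hP₁).1 q hq
    · rintro q ⟨P₁, hP₁, hq⟩ q' ⟨P₂, hP₂, hq'⟩ heq
      rcases hchain.total hP₁ hP₂ with h | h
      · exact (hc hP₂).2.1 q (h hq) q' hq' heq
      · exact (hc hP₁).2.1 q hq q' (h hq') heq
    · rintro q ⟨P₁, hP₁, hq⟩ q' ⟨P₂, hP₂, hq'⟩ heq hne
      rcases hchain.total hP₁ hP₂ with h | h
      · exact (hc hP₂).2.2 q (h hq) q' hq' heq hne
      · exact (hc hP₁).2.2 q hq q' (h hq') heq hne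
  have hempty : (∅ : Set (Sym2 X × Fin N)) ∈ 𝒮 :=
    ⟨fun q hq => absurd hq (Set.notMem_empty q),
      fun q hq => absurd hq (Set.notMem_empty q),
      fun q hq => absurd hq (Set.notMem_empty q)⟩
  obtain ⟨P, -, hPmax⟩ := zorn_subset_nonempty 𝒮 hchainub ∅ hempty
  obtain ⟨hsup, hfun, hprop⟩ := hPmax.1
  have hPub := hPmax.2
  -- uniqueness of matched partner
  have huniq : ∀ (x a b : X) (k : Fin N), (s(x, a), k) ∈ P → (s(x, b), k) ∈ P → a = b := by
    intro x a b k ha hb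
    by_cases he : s(x, a) = s(x, b)
    · exact sym2_pair_eq he
    · exact absurd (Sym2.mem_mk_left x b)
        (hprop (s(x, a), k) ha (s(x, b), k) hb rfl he x (Sym2.mem_mk_left x a))
  have hRmem : ∀ (c z : X) (k : Fin N), (s(c, z), k) ∈ P → (z, c) ∈ R := by
    intro c z k hz
    obtain ⟨a', b', hne', hR', he'⟩ := hsup _ hz
    rcases Sym2.eq_iff.mp he' with ⟨h1, h2⟩ | ⟨h1, h2⟩
    · subst h1; subst h2; exact hsymm _ hR'
    · subst h1; subst h2; exact hR'
  -- totality
  have htot : ∀ a b : X, a ≠ b → (a, b) ∈ R → ∃ k : Fin N, (s(a, b), k) ∈ P := by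
    intro a b hab hR
    by_contra hnone
    push_neg at hnone
    have hcard : ∀ c : X, {k : Fin N | ∃ z, (s(c, z), k) ∈ P}.ncard ≤ M := by
      intro c
      set g : Fin N → X := fun k => if h : ∃ z, (s(c, z), k) ∈ P then h.choose else c with hg
      have hgspec : ∀ k : Fin N, (∃ z, (s(c, z), k) ∈ P) → (s(c, g k), k) ∈ P := by
        intro k h
        simp only [hg, dif_pos h]
        exact h.choose_spec
      have hmem : ∀ k ∈ {k : Fin N | ∃ z, (s(c, z), k) ∈ P}, g k ∈ {y | (y, c) ∈ R} :=
        fun k hk => hRmem c (g k) k (hgspec k hk)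
      have hinj : Set.InjOn g {k : Fin N | ∃ z, (s(c, z), k) ∈ P} := by
        intro k hk k' hk' hgg
        exact hfun (s(c, g k), k) (hgspec k hk) (s(c, g k'), k') (hgspec k' hk') (by rw [hgg])
      exact le_trans (Set.ncard_le_ncard_of_injOn g hmem hinj (hfin c).1) (hfin c).2
    have hKuniv : ∀ k : Fin N,
        k ∈ {k : Fin N | ∃ z, (s(a, z), k) ∈ P} ∪ {k : Fin N | ∃ z, (s(b, z), k) ∈ P} := by
      intro k
      by_contra hk
      rw [Set.mem_union] at hk
      push_neg at hk
      obtain ⟨hka, hkb⟩ := hk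
      simp only [Set.mem_setOf_eq, not_exists] at hka hkb
      have hP' : insert (s(a, b), k) P ∈ 𝒮 := by
        refine ⟨?_, ?_, ?_⟩
        · rintro q (rfl | hq)
          · exact ⟨a, b, hab, hR, rfl⟩
          · exact hsup q hq
        · rintro q (rfl | hq) q' (rfl | hq') heq
          · rfl
          · exact absurd (show (s(a, b), q'.2) ∈ P by
              rw [show s(a,b) = q'.1 from heq]; simpa using hq') (hnone q'.2)
          · exact absurd (show (s(a, b), q.2) ∈ P by
              rw [show s(a,b) = q.1 from heq.symm]; simpa using hq) (hnone q.2)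
          · exact hfun q hq q' hq' heq
        · rintro q (rfl | hq) q' (rfl | hq') heq hne
          · exact absurd rfl hne
          · intro z hz hz'
            obtain ⟨w, hw⟩ := Sym2.mem_iff_exists.mp hz'
            have hzP : (s(z, w), k) ∈ P := by
              have hkq : k = q'.2 := heq
              rw [← hw, hkq]; exact hq'
            rcases Sym2.mem_iff.mp hz with rfl | rfl
            · exact hka w hzP
            · exact hkb w hzP
          · intro z hz hz'
            obtain ⟨w, hw⟩ := Sym2.mem_iff_exists.mp hz
            have hzP : (s(z, w), k) ∈ P := by
              have hkq : q.2 = k := heq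
              rw [← hw, ← hkq]; exact hq
            rcases Sym2.mem_iff.mp hz' with rfl | rfl
            · exact hka w hzP
            · exact hkb w hzP
          · exact hprop q hq q' hq' heq hne
      have := hPub hP' (Set.subset_insert _ _)
      exact hnone k (this (Set.mem_insert _ _))
    have huniv : ({k : Fin N | ∃ z, (s(a, z), k) ∈ P} ∪ {k : Fin N | ∃ z, (s(b, z), k) ∈ P})
        = Set.univ := Set.eq_univ_of_forall hKuniv
    have hle : (Set.univ : Set (Fin N)).ncard ≤ 2 * M := by
      rw [← huniv]
      exact le_trans (Set.ncard_union_le _ _)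
        (by have := hcard a; have := hcard b; omega)
    rw [Set.ncard_univ, Nat.card_eq_fintype_card, Fintype.card_fin] at hle
    omega
  -- define the involutions
  set f : Fin N → X → X := fun k x =>
    if h : ∃ y, (s(x, y), k) ∈ P ∧ y ≠ x then h.choose else x with hf
  have hfspec : ∀ (k : Fin N) (x : X), (∃ y, (s(x, y), k) ∈ P ∧ y ≠ x) →
      (s(x, f k x), k) ∈ P ∧ f k x ≠ x := by
    intro k x h
    simp only [hf, dif_pos h]
    exact h.choose_spec
  have hfid : ∀ (k : Fin N) (x : X), ¬(∃ y, (s(x, y), k) ∈ P ∧ y ≠ x) → f k x = x := by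
    intro k x h
    simp only [hf, dif_neg h]
  have hfmatch : ∀ (k : Fin N) (x y : X), (s(x, y), k) ∈ P → y ≠ x → f k x = y := by
    intro k x y hy hyx
    obtain ⟨h1, h2⟩ := hfspec k x ⟨y, hy, hyx⟩
    exact huniq x (f k x) y k h1 hy
  have hinvol : ∀ k, Function.Involutive (f k) := by
    intro k x
    by_cases h : ∃ y, (s(x, y), k) ∈ P ∧ y ≠ x
    · obtain ⟨h1, h2⟩ := hfspec k x h
      exact hfmatch k (f k x) x (by rwa [Sym2.eq_swap] at h1) (Ne.symm h2)
    · rw [hfid k x h, hfid k x h]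
  refine ⟨N, fun k => Function.Involutive.toPerm (f k) (hinvol k), fun k => ?_, fun k => ?_, ?_⟩
  · simpa [Function.Involutive.coe_toPerm] using hinvol k
  · intro p hp
    simp only [Set.mem_setOf_eq, Function.Involutive.coe_toPerm] at hp
    by_cases h : ∃ y, (s(p.2, y), k) ∈ P ∧ y ≠ p.2
    · obtain ⟨h1, -⟩ := hfspec k p.2 h
      have := hRmem p.2 (f k p.2) k h1
      rw [← hp] at this
      exact Or.inl (by simpa using this)
    · right
      simp only [Set.mem_setOf_eq]
      rw [hp, hfid k p.2 h]
  · intro p hp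
    by_cases hd : p.1 = p.2
    · exact Or.inl hd
    · have hpR : (p.1, p.2) ∈ R := by simpa using hp
      obtain ⟨k, hk⟩ := htot p.1 p.2 hd hpR
      right
      refine Set.mem_iUnion.mpr ⟨k, ?_⟩
      simp only [Set.mem_setOf_eq, Function.Involutive.coe_toPerm]
      exact (hfmatch k p.2 p.1 (by rwa [Sym2.eq_swap] at hk) hd).symm

/-- every uniformly locally finite coarse space is the Schreier coarse
space of an action of a group generated by involutions: the coarse structure is the
smallest one containing the graphs `{(γx, x)}` of all elements `γ` of the group
generated by a set `T` of involutive permutations of `X`. -/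
theorem ulf_coarse_space_is_schreier {X : Type*} (𝓔 : Set (Set (X × X)))
    (h𝓔 : IsCoarseStructure 𝓔)
    (hulf : ∀ S ∈ 𝓔, ∃ m : ℕ, ∀ x : X,
      {y | (y, x) ∈ S}.Finite ∧ {y | (y, x) ∈ S}.ncard ≤ m) :
    ∃ T : Set (Equiv.Perm X), (∀ g ∈ T, Function.Involutive g) ∧
      (∀ g ∈ Subgroup.closure T, {p : X × X | p.1 = g p.2} ∈ 𝓔) ∧
      (∀ 𝓕 : Set (Set (X × X)), IsCoarseStructure 𝓕 →
        (∀ g ∈ Subgroup.closure T, {p : X × X | p.1 = g p.2} ∈ 𝓕) → 𝓔 ⊆ 𝓕) := by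
  classical
  obtain ⟨hdown, hdir, hdiag, hcomp, hsinv⟩ := h𝓔
  have hunion : ∀ A ∈ 𝓔, ∀ B ∈ 𝓔, A ∪ B ∈ 𝓔 := by
    intro A hA B hB
    obtain ⟨C, hC, h1, h2⟩ := hdir A hA B hB
    exact hdown C hC _ (Set.union_subset h1 h2)
  refine ⟨{t : Equiv.Perm X | Function.Involutive ⇑t ∧ {p : X × X | p.1 = t p.2} ∈ 𝓔},
    fun g hg => hg.1, ?_, ?_⟩
  · intro g hg
    induction hg using Subgroup.closure_induction with
    | mem x hx => exact hx.2
    | one => simpa using hdiag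
    | mul x y hx hy px py =>
        refine hdown _ (hcomp _ px _ py) _ ?_
        intro p hp
        exact ⟨y p.2, by simpa using hp, rfl⟩
    | inv x hx px =>
        refine hdown _ (hsinv _ px) _ ?_
        intro p hp
        simp only [Set.mem_setOf_eq] at hp ⊢
        rw [hp]
        simp
  · intro 𝓕 h𝓕 hgr S hS
    obtain ⟨fdown, fdir, fdiag, -, -⟩ := h𝓕
    have funion : ∀ A ∈ 𝓕, ∀ B ∈ 𝓕, A ∪ B ∈ 𝓕 := by
      intro A hA B hB
      obtain ⟨C, hC, h1, h2⟩ := fdir A hA B hB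
      exact fdown C hC _ (Set.union_subset h1 h2)
    have hR𝓔 : S ∪ {p : X × X | (p.2, p.1) ∈ S} ∈ 𝓔 := hunion S hS _ (hsinv S hS)
    have hRsymm : ∀ p ∈ S ∪ {p : X × X | (p.2, p.1) ∈ S},
        (p.2, p.1) ∈ S ∪ {p : X × X | (p.2, p.1) ∈ S} := by
      rintro p (hp | hp)
      · exact Or.inr (by simpa using hp)
      · exact Or.inl hp
    obtain ⟨m1, h1⟩ := hulf S hS
    obtain ⟨m2, h2⟩ := hulf _ (hsinv S hS)
    have hdeg : ∀ x : X, {y | (y, x) ∈ S ∪ {p : X × X | (p.2, p.1) ∈ S}}.Finite ∧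
        {y | (y, x) ∈ S ∪ {p : X × X | (p.2, p.1) ∈ S}}.ncard ≤ m1 + m2 := by
      intro x
      have hset : {y | (y, x) ∈ S ∪ {p : X × X | (p.2, p.1) ∈ S}} =
          {y | (y, x) ∈ S} ∪ {y | (y, x) ∈ {p : X × X | (p.2, p.1) ∈ S}} := rfl
      constructor
      · rw [hset]; exact (h1 x).1.union (h2 x).1
      · rw [hset]
        exact le_trans (Set.ncard_union_le _ _) (Nat.add_le_add (h1 x).2 (h2 x).2)
    obtain ⟨n, t, hinvo, hgsub, hcover⟩ :=
      exists_involutions_cover (S ∪ {p : X × X | (p.2, p.1) ∈ S}) hRsymm (m1 + m2) hdeg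
    have hTmem : ∀ k : Fin n, t k ∈ Subgroup.closure
        {g : Equiv.Perm X | Function.Involutive ⇑g ∧ {p : X × X | p.1 = g p.2} ∈ 𝓔} :=
      fun k => Subgroup.subset_closure
        ⟨hinvo k, hdown _ (hunion _ hR𝓔 _ hdiag) _ (hgsub k)⟩
    have hUf : ∀ s : Finset (Fin n), (⋃ k ∈ s, {p : X × X | p.1 = t k p.2}) ∈ 𝓕 := by
      intro s
      induction s using Finset.induction with
      | empty => simpa using fdown _ fdiag ∅ (Set.empty_subset _)
      | @insert a s ha ih =>
          rw [Finset.set_biUnion_insert]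
          exact funion _ (hgr _ (hTmem _)) _ ih
    refine fdown _ (funion _ fdiag _ (hUf Finset.univ)) S ?_
    intro p hp
    have hcp := hcover (Or.inl hp)
    rw [Set.mem_union] at hcp
    rcases hcp with h | h
    · exact Or.inl h
    · obtain ⟨k, hk⟩ := Set.mem_iUnion.mp h
      refine Or.inr ?_
      simp only [Set.mem_iUnion]
      exact ⟨k, Finset.mem_univ k, hk⟩
end

section
/- Let Γ be a finitely generated group with finite symmetric generating set S acting on a set X. Then the C*-algebra C*(ℓ∞X, λ_X(Γ)) generated by ℓ∞(X) and the permutation representation equals the uniform Roe algebra of the Schreier graph |Γ ↷ X| (the graph on vertex set X with edge set {(sx,x) : x ∈ X, s ∈ S}). -/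
open scoped ENNReal Pointwise

/-- The Schreier graph of an action `Γ ↷ X` with respect to a generating set `S`:
`x ∼ y` iff `x ≠ y` and some `s ∈ S` carries one to the other. -/
def schreierGraph {Γ X : Type*} [Group Γ] [MulAction Γ X] (S : Finset Γ) :
    SimpleGraph X where
  Adj x y := x ≠ y ∧ ∃ s ∈ S, s • x = y ∨ s • y = x
  symm := by
    constructor
    rintro x y ⟨hxy, s, hs, h⟩
    exact ⟨hxy.symm, s, hs, h.symm⟩
  loopless := by constructor; rintro x ⟨hx, -⟩; exact hx rfl

/-- The generating set for `C*(ℓ∞X, λ_X(Γ))` inside `B(ℓ²X)`. -/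
def roeGens (Γ : Type*) {X : Type*} [DecidableEq X] [Group Γ] [MulAction Γ X] :
    Set (lp (fun _ : X => ℂ) 2 →L[ℂ] lp (fun _ : X => ℂ) 2) :=
  {a | ∃ f : X → ℂ, (∃ C : ℝ, ∀ x, ‖f x‖ ≤ C) ∧
      ∀ (g : lp (fun _ : X => ℂ) 2) (x : X), (a g) x = f x * g x} ∪
  {a | ∃ γ : Γ, ∀ x : X, a (lp.single 2 x 1) = lp.single 2 (γ • x) 1}

noncomputable section RoeAux

variable {Γ X : Type*} [DecidableEq X] [Group Γ] [MulAction Γ X]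

private lemma htwo : (0:ℝ) < (2 : ℝ≥0∞).toReal := by norm_num

lemma lp_single_eq_smul (z : X) (c : ℂ) :
    (lp.single 2 z c : lp (fun _ : X => ℂ) 2) = c • lp.single 2 z (1:ℂ) := by
  apply lp.ext
  funext w
  rw [lp.coeFn_smul, Pi.smul_apply]
  by_cases h : w = z
  · subst h
    rw [lp.single_apply_self, lp.single_apply_self]
    simp
  · rw [lp.single_apply_ne _ _ _ h, lp.single_apply_ne _ _ _ h, smul_zero]

lemma lp_apply_eq_inner (g : lp (fun _ : X => ℂ) 2) (x : X) :
    @inner ℂ _ _ (lp.single 2 x (1:ℂ)) g = g x := by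
  rw [lp.inner_single_left]
  simp [RCLike.inner_apply]

lemma clm_ext_single {a b : lp (fun _ : X => ℂ) 2 →L[ℂ] lp (fun _ : X => ℂ) 2}
    (h : ∀ y, a (lp.single 2 y 1) = b (lp.single 2 y 1)) : a = b := by
  refine ContinuousLinearMap.ext fun g => ?_
  have hg : HasSum (fun y => lp.single 2 y (g y)) g := lp.hasSum_single (by norm_num) g
  have ha := hg.mapL a
  have hb := hg.mapL b
  have hfun : (fun y => a (lp.single 2 y (g y))) = fun y => b (lp.single 2 y (g y)) := by
    funext y
    rw [lp_single_eq_smul y (g y), map_smul, map_smul, h]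
  rw [hfun] at ha
  exact ha.unique hb

lemma entry_norm_le (a : lp (fun _ : X => ℂ) 2 →L[ℂ] lp (fun _ : X => ℂ) 2) (x y : X) :
    ‖(a (lp.single 2 y 1)) x‖ ≤ ‖a‖ := by
  have h1 : ‖(a (lp.single 2 y 1)) x‖ ≤ ‖a (lp.single 2 y 1)‖ :=
    lp.norm_apply_le_norm (by norm_num) _ x
  have h2 : ‖(lp.single 2 y (1:ℂ) : lp (fun _ : X => ℂ) 2)‖ = 1 := by
    simpa using lp.norm_single (p := 2) (E := fun _ : X => ℂ) (by norm_num)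
      (fun _ : X => (1:ℂ)) y
  calc ‖(a (lp.single 2 y 1)) x‖ ≤ ‖a (lp.single 2 y 1)‖ := h1
    _ ≤ ‖a‖ * ‖(lp.single 2 y (1:ℂ) : lp (fun _ : X => ℂ) 2)‖ := a.le_opNorm _
    _ = ‖a‖ := by rw [h2, mul_one]

lemma memℓp_mul (f : X → ℂ) (C : ℝ) (hC : ∀ x, ‖f x‖ ≤ C) (g : lp (fun _ : X => ℂ) 2) :
    Memℓp (fun x => f x * g x) 2 := by
  apply memℓp_gen
  have hs : Summable fun x => ‖g x‖ ^ (2:ℝ≥0∞).toReal := (lp.memℓp g).summable htwo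
  refine Summable.of_nonneg_of_le (fun x => Real.rpow_nonneg (norm_nonneg _) _)
    (fun x => ?_) (hs.mul_left ((max C 0) ^ (2:ℝ≥0∞).toReal))
  have h1 : ‖f x * g x‖ ≤ max C 0 * ‖g x‖ := by
    rw [norm_mul]
    exact mul_le_mul_of_nonneg_right ((hC x).trans (le_max_left _ _)) (norm_nonneg _)
  calc ‖f x * g x‖ ^ (2:ℝ≥0∞).toReal ≤ (max C 0 * ‖g x‖) ^ (2:ℝ≥0∞).toReal :=
        Real.rpow_le_rpow (norm_nonneg _) h1 (le_of_lt htwo)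
    _ = max C 0 ^ (2:ℝ≥0∞).toReal * ‖g x‖ ^ (2:ℝ≥0∞).toReal :=
        Real.mul_rpow (le_max_right _ _) (norm_nonneg _)

/-- The multiplication operator by a bounded function. -/
def mulOp (f : X → ℂ) (C : ℝ) (hC : ∀ x, ‖f x‖ ≤ C) :
    lp (fun _ : X => ℂ) 2 →L[ℂ] lp (fun _ : X => ℂ) 2 :=
  LinearMap.mkContinuous
    { toFun := fun g => (⟨fun x => f x * g x, memℓp_mul f C hC g⟩ : lp (fun _ : X => ℂ) 2)
      map_add' := fun g h => lp.ext (funext fun x => by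
        show f x * (g + h) x = _
        simp only [lp.coeFn_add, Pi.add_apply]
        show _ = f x * g x + f x * h x
        ring)
      map_smul' := fun c g => lp.ext (funext fun x => by
        show f x * (c • g) x = _
        simp only [lp.coeFn_smul, Pi.smul_apply, smul_eq_mul, RingHom.id_apply]
        show _ = c * (f x * g x)
        ring) }
    (max C 0)
    (by
      intro g
      refine lp.norm_le_of_tsum_le htwo (mul_nonneg (le_max_right _ _) (norm_nonneg _)) ?_
      have hs : Summable fun x => ‖g x‖ ^ (2:ℝ≥0∞).toReal := (lp.memℓp g).summable htwo
      have hterm : ∀ x : X, ‖f x * g x‖ ^ (2:ℝ≥0∞).toReal ≤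
          max C 0 ^ (2:ℝ≥0∞).toReal * ‖g x‖ ^ (2:ℝ≥0∞).toReal := by
        intro x
        have h1 : ‖f x * g x‖ ≤ max C 0 * ‖g x‖ := by
          rw [norm_mul]
          exact mul_le_mul_of_nonneg_right ((hC x).trans (le_max_left _ _)) (norm_nonneg _)
        calc ‖f x * g x‖ ^ (2:ℝ≥0∞).toReal ≤ (max C 0 * ‖g x‖) ^ (2:ℝ≥0∞).toReal :=
              Real.rpow_le_rpow (norm_nonneg _) h1 (le_of_lt htwo)
          _ = _ := Real.mul_rpow (le_max_right _ _) (norm_nonneg _)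
      calc ∑' x : X, ‖f x * g x‖ ^ (2:ℝ≥0∞).toReal
          ≤ ∑' x : X, max C 0 ^ (2:ℝ≥0∞).toReal * ‖g x‖ ^ (2:ℝ≥0∞).toReal :=
            Summable.tsum_le_tsum hterm ((memℓp_mul f C hC g).summable htwo) (hs.mul_left _)
        _ = max C 0 ^ (2:ℝ≥0∞).toReal * ∑' x : X, ‖g x‖ ^ (2:ℝ≥0∞).toReal := tsum_mul_left
        _ = max C 0 ^ (2:ℝ≥0∞).toReal * ‖g‖ ^ (2:ℝ≥0∞).toReal := by
            rw [← lp.norm_rpow_eq_tsum htwo g]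
        _ = (max C 0 * ‖g‖) ^ (2:ℝ≥0∞).toReal :=
            (Real.mul_rpow (le_max_right _ _) (norm_nonneg _)).symm)

@[simp] lemma mulOp_apply (f : X → ℂ) (C : ℝ) (hC : ∀ x, ‖f x‖ ≤ C)
    (g : lp (fun _ : X => ℂ) 2) (x : X) : (mulOp f C hC g) x = f x * g x := rfl

lemma memℓp_trans (γ : Γ) (g : lp (fun _ : X => ℂ) 2) :
    Memℓp (fun x => g (γ⁻¹ • x)) 2 := by
  apply memℓp_gen
  have hs : Summable fun z : X => ‖g z‖ ^ (2:ℝ≥0∞).toReal := (lp.memℓp g).summable htwo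
  exact ((MulAction.toPerm (γ⁻¹ : Γ) : Equiv.Perm X).summable_iff
    (f := fun z : X => ‖g z‖ ^ (2:ℝ≥0∞).toReal)).2 hs

/-- The translation operator. -/
def transOp (γ : Γ) :
    lp (fun _ : X => ℂ) 2 →L[ℂ] lp (fun _ : X => ℂ) 2 :=
  LinearMap.mkContinuous
    { toFun := fun g => (⟨fun x => g (γ⁻¹ • x), memℓp_trans γ g⟩ : lp (fun _ : X => ℂ) 2)
      map_add' := fun g h => lp.ext (funext fun x => by
        show (g + h) (γ⁻¹ • x) = _
        simp only [lp.coeFn_add, Pi.add_apply])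
      map_smul' := fun c g => lp.ext (funext fun x => by
        show (c • g) (γ⁻¹ • x) = _
        simp only [lp.coeFn_smul, Pi.smul_apply, RingHom.id_apply]) }
    1
    (by
      intro g
      refine lp.norm_le_of_tsum_le htwo (by positivity) ?_
      have h1 : ∑' x : X, ‖g (γ⁻¹ • x)‖ ^ (2:ℝ≥0∞).toReal
          = ∑' z : X, ‖g z‖ ^ (2:ℝ≥0∞).toReal :=
        Equiv.tsum_eq (MulAction.toPerm (γ⁻¹ : Γ) : Equiv.Perm X)
          (fun z : X => ‖g z‖ ^ (2:ℝ≥0∞).toReal)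
      calc ∑' x : X, ‖g (γ⁻¹ • x)‖ ^ (2:ℝ≥0∞).toReal
          = ∑' z : X, ‖g z‖ ^ (2:ℝ≥0∞).toReal := h1
        _ = ‖g‖ ^ (2:ℝ≥0∞).toReal := (lp.norm_rpow_eq_tsum htwo g).symm
        _ ≤ (1 * ‖g‖) ^ (2:ℝ≥0∞).toReal := by rw [one_mul])

@[simp] lemma transOp_apply (γ : Γ) (g : lp (fun _ : X => ℂ) 2) (x : X) :
    (transOp (X := X) γ g) x = g (γ⁻¹ • x) := rfl

lemma transOp_single (γ : Γ) (y : X) :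
    transOp (X := X) γ (lp.single 2 y 1) = lp.single 2 (γ • y) 1 := by
  apply lp.ext
  funext x
  show (lp.single 2 y (1:ℂ) : lp (fun _ : X => ℂ) 2) (γ⁻¹ • x) = _
  by_cases h : x = γ • y
  · subst h
    rw [inv_smul_smul, lp.single_apply_self, lp.single_apply_self]
  · rw [lp.single_apply_ne _ _ _ (fun hc => h (by rw [← hc, smul_inv_smul])),
      lp.single_apply_ne _ _ _ h]

lemma star_entry (a : lp (fun _ : X => ℂ) 2 →L[ℂ] lp (fun _ : X => ℂ) 2) (x y : X) :
    ((star a) (lp.single 2 y 1)) x = (starRingEnd ℂ) ((a (lp.single 2 x 1)) y) := by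
  rw [← lp_apply_eq_inner, ContinuousLinearMap.star_eq_adjoint,
    ContinuousLinearMap.adjoint_inner_right, ← lp_apply_eq_inner, ← inner_conj_symm]

lemma edist_smul_le_one {S : Finset Γ} {s : Γ} (hs : s ∈ S) (z : X) :
    (schreierGraph (X := X) S).edist (s • z) z ≤ 1 := by
  by_cases h : s • z = z
  · rw [h]; simp
  · exact le_of_eq (SimpleGraph.edist_eq_one_iff_adj.2 ⟨h, s, hs, Or.inr rfl⟩)

lemma edist_listProd_smul {S : Finset Γ} {l : List Γ} (hl : ∀ s ∈ l, s ∈ S) (y : X) :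
    (schreierGraph (X := X) S).edist (l.prod • y) y ≤ (l.length : ℕ∞) := by
  induction l with
  | nil => simp
  | cons s l ih =>
    have h1 : (schreierGraph (X := X) S).edist ((s :: l).prod • y) (l.prod • y) ≤ 1 := by
      rw [List.prod_cons, mul_smul]
      exact edist_smul_le_one (hl s List.mem_cons_self) _
    have h2 := ih (fun t ht => hl t (List.mem_cons_of_mem _ ht))
    calc (schreierGraph (X := X) S).edist ((s :: l).prod • y) y
        ≤ _ + _ := SimpleGraph.edist_triangle (v := l.prod • y)
      _ ≤ 1 + (l.length : ℕ∞) := add_le_add h1 h2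
      _ = ((s :: l).length : ℕ∞) := by
          rw [List.length_cons]
          push_cast
          rw [add_comm]

lemma exists_prod_of_walk [DecidableEq Γ] {S : Finset Γ} (hsymS : ∀ s ∈ S, s⁻¹ ∈ S)
    {y x : X} (p : (schreierGraph (X := X) S).Walk y x) :
    ∃ γ : Γ, γ ∈ (insert 1 S : Finset Γ) ^ p.length ∧ γ • y = x := by
  induction p with
  | nil => exact ⟨1, by simp [pow_zero, Finset.mem_one], one_smul _ _⟩
  | @cons y z x h p ih =>
    obtain ⟨γ, hγ, hγs⟩ := ih
    obtain ⟨hne, s, hs, hcase⟩ := id h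
    obtain ⟨t, ht, hty⟩ : ∃ t ∈ S, t • y = z := by
      rcases hcase with h' | h'
      · exact ⟨s, hs, h'⟩
      · exact ⟨s⁻¹, hsymS s hs, by rw [← h', inv_smul_smul]⟩
    refine ⟨γ * t, ?_, by rw [mul_smul, hty, hγs]⟩
    rw [SimpleGraph.Walk.length_cons, pow_succ]
    exact Finset.mul_mem_mul hγ (Finset.mem_insert_of_mem ht)

lemma mem_adjoin_of_list (a : lp (fun _ : X => ℂ) 2 →L[ℂ] lp (fun _ : X => ℂ) 2)
    (l : List Γ)
    (h : ∀ x y : X, (a (lp.single 2 y 1)) x ≠ 0 → ∃ γ ∈ l, γ • y = x) :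
    a ∈ StarAlgebra.adjoin ℂ (roeGens Γ (X := X)) := by
  induction l generalizing a with
  | nil =>
    have ha : a = 0 := by
      apply clm_ext_single
      intro y
      apply lp.ext
      funext x
      show (a (lp.single 2 y 1)) x = ((0 : lp (fun _ : X => ℂ) 2 →L[ℂ] lp (fun _ : X => ℂ) 2)
        (lp.single 2 y 1)) x
      rw [ContinuousLinearMap.zero_apply]
      by_contra hne
      have h0 : (a (lp.single 2 y 1)) x ≠ 0 := by
        intro hc
        apply hne
        rw [hc]
        simp
      obtain ⟨γ, hγ, -⟩ := h x y h0
      exact List.not_mem_nil hγ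
    rw [ha]
    exact zero_mem _
  | cons γ l ih =>
    set f : X → ℂ := fun x => (a (lp.single 2 (γ⁻¹ • x) 1)) x with hf
    have hfC : ∀ x, ‖f x‖ ≤ ‖a‖ := fun x => entry_norm_le a x _
    set m := mulOp f ‖a‖ hfC * transOp (X := X) γ with hm
    have hm_entry : ∀ x y : X, (m (lp.single 2 y 1)) x
        = if x = γ • y then f x else 0 := by
      intro x y
      rw [hm, ContinuousLinearMap.mul_apply, transOp_single, mulOp_apply]
      by_cases hxy : x = γ • y
      · rw [if_pos hxy, hxy, lp.single_apply_self, mul_one]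
      · rw [if_neg hxy, lp.single_apply_ne _ _ _ hxy, mul_zero]
    have key : ∀ x y : X, ((a - m) (lp.single 2 y 1)) x ≠ 0 → ∃ γ' ∈ l, γ' • y = x := by
      intro x y hne
      rw [ContinuousLinearMap.sub_apply, lp.coeFn_sub, Pi.sub_apply, hm_entry] at hne
      by_cases hxy : x = γ • y
      · subst hxy
        exfalso
        apply hne
        rw [if_pos rfl]
        have hx : f (γ • y) = (a (lp.single 2 y 1)) (γ • y) := by
          show (a (lp.single 2 (γ⁻¹ • (γ • y)) 1)) (γ • y) = _
          rw [inv_smul_smul]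
        rw [hx, sub_self]
      · rw [if_neg hxy, sub_zero] at hne
        obtain ⟨γ', hγ', hs⟩ := h x y hne
        rcases List.mem_cons.1 hγ' with rfl | hmem
        · exact absurd hs.symm hxy
        · exact ⟨γ', hmem, hs⟩
    have hmmem : m ∈ StarAlgebra.adjoin ℂ (roeGens Γ (X := X)) := by
      apply mul_mem
      · exact StarAlgebra.subset_adjoin ℂ _ (Or.inl ⟨f, ⟨‖a‖, hfC⟩, fun g x => rfl⟩)
      · exact StarAlgebra.subset_adjoin ℂ _ (Or.inr ⟨γ, fun y => transOp_single γ y⟩)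
    have ha' := ih (a - m) key
    have : a = m + (a - m) := by abel
    rw [this]
    exact add_mem hmmem ha'

end RoeAux

/-- for a finitely generated group `Γ` with finite symmetric generating
set `S` acting on `X`, the C*-algebra `C*(ℓ∞X, λ_X(Γ))` equals the uniform Roe algebra
of the Schreier graph, i.e. the norm closure of the finite-propagation operators for
the Schreier graph metric. -/
theorem cstar_perm_alg_eq_uniform_roe {Γ X : Type*} [DecidableEq X] [Group Γ]
    [MulAction Γ X] (S : Finset Γ) (hsymS : ∀ s ∈ S, s⁻¹ ∈ S)
    (hgen : Subgroup.closure (S : Set Γ) = ⊤) :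
    ((StarAlgebra.adjoin ℂ (roeGens Γ (X := X))).topologicalClosure :
        Set (lp (fun _ : X => ℂ) 2 →L[ℂ] lp (fun _ : X => ℂ) 2)) =
      closure {a : lp (fun _ : X => ℂ) 2 →L[ℂ] lp (fun _ : X => ℂ) 2 |
        ∃ R : ℕ, ∀ x y : X, (R : ℕ∞) < (schreierGraph (X := X) S).edist x y →
          (a (lp.single 2 y 1)) x = 0} := by
  classical
  rw [StarSubalgebra.topologicalClosure_coe]
  set P : Set (lp (fun _ : X => ℂ) 2 →L[ℂ] lp (fun _ : X => ℂ) 2) :=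
    {a | ∃ R : ℕ, ∀ x y : X, (R : ℕ∞) < (schreierGraph (X := X) S).edist x y →
      (a (lp.single 2 y 1)) x = 0} with hP
  -- the propagation set is a star subalgebra
  have hone : (1 : lp (fun _ : X => ℂ) 2 →L[ℂ] lp (fun _ : X => ℂ) 2) ∈ P := by
    refine ⟨0, fun x y hxy => ?_⟩
    have hne : x ≠ y := by
      rintro rfl
      simp at hxy
    rw [ContinuousLinearMap.one_apply]
    exact lp.single_apply_ne _ _ _ hne
  have hmul : ∀ a b, a ∈ P → b ∈ P → a * b ∈ P := by
    rintro a b ⟨Ra, ha⟩ ⟨Rb, hb⟩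
    refine ⟨Ra + Rb, fun x y hxy => ?_⟩
    have hsum : HasSum (fun z : X => lp.single 2 z ((b (lp.single 2 y 1)) z))
        (b (lp.single 2 y 1)) := lp.hasSum_single (by norm_num) _
    have h2 := (hsum.mapL a).mapL (innerSL ℂ (lp.single 2 x (1:ℂ)))
    have hz : ∀ z : X,
        innerSL ℂ (lp.single 2 x (1:ℂ)) (a (lp.single 2 z ((b (lp.single 2 y 1)) z))) = 0 := by
      intro z
      rw [lp_single_eq_smul z, map_smul, map_smul, innerSL_apply_apply, lp_apply_eq_inner]
      by_cases hbz : (b (lp.single 2 y 1)) z = 0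
      · rw [hbz, zero_smul]
      · have hzy : (schreierGraph (X := X) S).edist z y ≤ (Rb : ℕ∞) :=
          not_lt.1 fun hc => hbz (hb z y hc)
        by_cases haz : (a (lp.single 2 z 1)) x = 0
        · rw [haz, smul_zero]
        · exfalso
          have hxz : (schreierGraph (X := X) S).edist x z ≤ (Ra : ℕ∞) :=
            not_lt.1 fun hc => haz (ha x z hc)
          have htri : (schreierGraph (X := X) S).edist x y ≤ ((Ra + Rb : ℕ) : ℕ∞) := by
            calc (schreierGraph (X := X) S).edist x y
                ≤ _ + _ := SimpleGraph.edist_triangle (v := z)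
              _ ≤ (Ra : ℕ∞) + (Rb : ℕ∞) := add_le_add hxz hzy
              _ = ((Ra + Rb : ℕ) : ℕ∞) := by push_cast; ring
          exact absurd hxy (not_lt.2 htri)
    have hfun : (fun z : X =>
        innerSL ℂ (lp.single 2 x (1:ℂ)) (a (lp.single 2 z ((b (lp.single 2 y 1)) z))))
        = fun _ => (0:ℂ) := funext hz
    rw [hfun] at h2
    have h0 := hasSum_zero.unique h2
    rw [ContinuousLinearMap.mul_apply, ← lp_apply_eq_inner]
    rw [innerSL_apply_apply] at h0
    exact h0.symm
  have hadd : ∀ a b, a ∈ P → b ∈ P → a + b ∈ P := by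
    rintro a b ⟨Ra, ha⟩ ⟨Rb, hb⟩
    refine ⟨max Ra Rb, fun x y hxy => ?_⟩
    have h1 : (Ra : ℕ∞) < (schreierGraph (X := X) S).edist x y :=
      lt_of_le_of_lt (by exact_mod_cast Nat.cast_le.2 (le_max_left Ra Rb)) hxy
    have h2 : (Rb : ℕ∞) < (schreierGraph (X := X) S).edist x y :=
      lt_of_le_of_lt (by exact_mod_cast Nat.cast_le.2 (le_max_right Ra Rb)) hxy
    rw [ContinuousLinearMap.add_apply, lp.coeFn_add, Pi.add_apply, ha x y h1, hb x y h2,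
      add_zero]
  have hsmul : ∀ (c : ℂ) a, a ∈ P → c • a ∈ P := by
    rintro c a ⟨R, ha⟩
    refine ⟨R, fun x y hxy => ?_⟩
    rw [ContinuousLinearMap.smul_apply, lp.coeFn_smul, Pi.smul_apply, ha x y hxy, smul_zero]
  have hstar : ∀ a, a ∈ P → star a ∈ P := by
    rintro a ⟨R, ha⟩
    refine ⟨R, fun x y hxy => ?_⟩
    rw [star_entry, ha y x (by rwa [SimpleGraph.edist_comm] at hxy), map_zero]
  -- generators are in P
  have hgens : roeGens Γ (X := X) ⊆ P := by
    rintro a (⟨f, ⟨C, hC⟩, hfa⟩ | ⟨γ, hγ⟩)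
    · refine ⟨0, fun x y hxy => ?_⟩
      have hne : x ≠ y := by
        rintro rfl
        simp at hxy
      rw [hfa, lp.single_apply_ne _ _ _ hne, mul_zero]
    · -- translation operator: write γ as a word in S
      have hmem : γ ∈ Submonoid.closure (S : Set Γ) := by
        have hinv : ((S : Set Γ))⁻¹ ⊆ (S : Set Γ) := by
          intro s hs
          have : s⁻¹ ∈ S := hs
          simpa using hsymS s⁻¹ this
        have hun : (S : Set Γ) ∪ ((S : Set Γ))⁻¹ = (S : Set Γ) :=
          Set.union_eq_self_of_subset_right hinv
        have h1 : γ ∈ (Subgroup.closure (S : Set Γ)).toSubmonoid := by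
          rw [hgen]; trivial
        rwa [Subgroup.closure_toSubmonoid, hun] at h1
      obtain ⟨l, hl, hlprod⟩ := Submonoid.exists_list_of_mem_closure hmem
      refine ⟨l.length, fun x y hxy => ?_⟩
      rw [hγ y]
      apply lp.single_apply_ne
      rintro rfl
      have := edist_listProd_smul (S := S) hl y
      rw [hlprod] at this
      exact absurd hxy (not_lt.2 this)
  apply subset_antisymm
  · apply closure_mono
    intro a ha
    induction ha using StarAlgebra.adjoin_induction with
    | mem a ha => exact hgens ha
    | algebraMap c =>
      have : (algebraMap ℂ (lp (fun _ : X => ℂ) 2 →L[ℂ] lp (fun _ : X => ℂ) 2)) c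
          = c • 1 := by rw [Algebra.algebraMap_eq_smul_one]
      rw [this]
      exact hsmul c 1 hone
    | add a b _ _ ha hb => exact hadd a b ha hb
    | mul a b _ _ ha hb => exact hmul a b ha hb
    | star a _ ha => exact hstar a ha
  · apply closure_mono
    rintro a ⟨R, hR⟩
    set T : Finset Γ := (insert 1 S : Finset Γ) ^ R with hT
    apply mem_adjoin_of_list a T.toList
    intro x y hne
    have hle : (schreierGraph (X := X) S).edist x y ≤ (R : ℕ∞) :=
      not_lt.1 fun hc => hne (hR x y hc)
    have hle' : (schreierGraph (X := X) S).edist y x ≤ (R : ℕ∞) := by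
      rwa [SimpleGraph.edist_comm]
    obtain ⟨p, hp⟩ := SimpleGraph.exists_walk_of_edist_ne_top
      (fun hc => by rw [hc] at hle'; exact absurd hle' (by simp))
    have hplen : p.length ≤ R := by
      have : (p.length : ℕ∞) ≤ (R : ℕ∞) := by rw [hp]; exact hle'
      exact_mod_cast this
    obtain ⟨γ, hγ, hγs⟩ := exists_prod_of_walk hsymS p
    refine ⟨γ, ?_, hγs⟩
    rw [Finset.mem_toList, hT]
    exact Finset.pow_subset_pow_right (Finset.mem_insert_self 1 S) hplen hγ
end

section
/- Let (X,E) be a uniformly locally finite graph and ξₙ ∈ ℓ²(X) unit vectors with non-negative entries such that ‖(1−P_{Vₙ})ξₙ‖ → 0 for some family of disjoint subsets Vₙ ⊆ X, and suppose a bijection γ : X → X maps edges to edges (bounded displacement: d(γx, x) ≤ C for all x). If there exist L ≥ 1 with L⁻¹ξₙ(x) ≤ ξₙ(y) ≤ Lξₙ(x) whenever d(x,y) ≤ C, then defining h^γ ∈ ℓ∞(X) by h^γ(x) = ξₙ(x)/ξₙ(γ⁻¹x) for x ∈ Vₙ (and 1 elsewhere), h^γ is a bounded invertible multiplication operator with L⁻¹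 ≤ h^γ ≤ L, and ‖h^γ λ(γ) ξₙ − ξₙ‖ ≤ 2‖(1−P_{Vₙ})ξₙ‖·(1 + L). -/
open scoped ENNReal

/-- correcting a translate of almost-localized vectors by a bounded
multiplication operator.  If the unit vectors `ξₙ ≥ 0` have almost all their mass in the
disjoint sets `Vₙ`, `γ` has displacement at most `C`, and the entries of `ξₙ` vary by a
factor at most `L` over distances `≤ C`, then the multiplication operator `h` with
`ξₙ = h ⋅ (ξₙ ∘ γ⁻¹)` on `Vₙ` and `h = 1` elsewhere satisfies `L⁻¹ ≤ h ≤ L` and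
`‖h λ(γ) ξₙ − ξₙ‖ ≤ 2 ‖(1−P_{Vₙ})ξₙ‖ (1 + L)`. -/
theorem correcting_translate_by_multiplication {X : Type*} (G : SimpleGraph X) (M : ℕ)
    (hulf : ∀ x : X, (G.neighborSet x).Finite ∧ (G.neighborSet x).ncard ≤ M)
    (ξ : ℕ → X → ℝ) (hsq : ∀ n, Summable (fun x => ξ n x ^ 2))
    (hunit : ∀ n, ∑' x : X, ξ n x ^ 2 = 1) (hpos : ∀ n x, 0 ≤ ξ n x)
    (V : ℕ → Set X) (hdisj : Pairwise (Function.onFun Disjoint V))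
    (htail : Filter.Tendsto
      (fun n => Real.sqrt (∑' x : X, ((V n)ᶜ.indicator (ξ n) x) ^ 2))
      Filter.atTop (nhds 0))
    (γ : Equiv.Perm X) (C : ℕ) (hC : ∀ x : X, G.edist (γ x) x ≤ (C : ℕ∞))
    (L : ℝ) (hL : 1 ≤ L)
    (hratio : ∀ (n : ℕ) (x y : X), G.edist x y ≤ (C : ℕ∞) →
      L⁻¹ * ξ n x ≤ ξ n y ∧ ξ n y ≤ L * ξ n x) :
    ∀ n, ∃ h : X → ℝ,
      (∀ x ∈ V n, ξ n x = h x * ξ n (γ.symm x)) ∧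
      (∀ x ∉ V n, h x = 1) ∧
      (∀ x, L⁻¹ ≤ h x ∧ h x ≤ L) ∧
      Real.sqrt (∑' x : X, (h x * ξ n (γ.symm x) - ξ n x) ^ 2)
        ≤ 2 * Real.sqrt (∑' x : X, ((V n)ᶜ.indicator (ξ n) x) ^ 2) * (1 + L) := by
  intro n
  have hL0 : (0:ℝ) < L := lt_of_lt_of_le one_pos hL
  -- distance to the pulled-back point
  have hdist : ∀ x : X, G.edist x (γ.symm x) ≤ (C : ℕ∞) := by
    intro x
    have := hC (γ.symm x)
    rwa [Equiv.apply_symm_apply] at this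
  have hdist' : ∀ x : X, G.edist (γ.symm x) x ≤ (C : ℕ∞) := by
    intro x; rw [G.edist_comm]; exact hdist x
  -- the ratio bounds between ξ x and ξ (γ.symm x)
  have hA : ∀ x, ξ n (γ.symm x) ≤ L * ξ n x := fun x => (hratio n x (γ.symm x) (hdist x)).2
  have hB : ∀ x, L⁻¹ * ξ n (γ.symm x) ≤ ξ n x := by
    intro x
    have := (hratio n (γ.symm x) x (hdist' x)).1
    exact this
  have hB' : ∀ x, ξ n x ≤ L * ξ n (γ.symm x) := fun x => (hratio n (γ.symm x) x (hdist' x)).2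
  classical
  refine ⟨fun x => if x ∈ V n ∧ ξ n (γ.symm x) ≠ 0 then ξ n x / ξ n (γ.symm x) else 1,
    ?_, ?_, ?_, ?_⟩
  · intro x hx
    dsimp only
    by_cases hz : ξ n (γ.symm x) = 0
    · have : ξ n x = 0 := by
        have := hB' x
        have := hpos n x
        nlinarith [hB' x]
      simp [hz, this]
    · rw [if_pos ⟨hx, hz⟩, div_mul_cancel₀ _ hz]
  · intro x hx
    dsimp only
    rw [if_neg (by tauto)]
  · intro x
    dsimp only
    by_cases hc : x ∈ V n ∧ ξ n (γ.symm x) ≠ 0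
    · rw [if_pos hc]
      have hz : 0 < ξ n (γ.symm x) := lt_of_le_of_ne (hpos n _) (Ne.symm hc.2)
      constructor
      · rw [le_div_iff₀ hz]; exact hB x
      · rw [div_le_iff₀ hz]; exact hB' x
    · rw [if_neg hc]
      exact ⟨inv_le_one_of_one_le₀ hL, hL⟩
  · -- norm estimate
    set g : X → ℝ := fun x => ((V n)ᶜ.indicator (ξ n) x) ^ 2 with hg
    have hgsum : Summable g := by
      refine (hsq n).of_nonneg_of_le (fun x => sq_nonneg _) (fun x => ?_)
      by_cases hx : x ∈ (V n)ᶜ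
      · simp [g, Set.indicator_of_mem hx]
      · simp [g, Set.indicator_of_notMem hx, sq_nonneg]
    have key : ∀ x : X,
        ((if x ∈ V n ∧ ξ n (γ.symm x) ≠ 0 then ξ n x / ξ n (γ.symm x) else 1) *
          ξ n (γ.symm x) - ξ n x) ^ 2 ≤ (1 + L) ^ 2 * g x := by
      intro x
      by_cases hx : x ∈ V n
      · by_cases hz : ξ n (γ.symm x) = 0
        · have hx0 : ξ n x = 0 := by nlinarith [hB' x, hpos n x]
          have : (0:ℝ) ≤ (1 + L) ^ 2 * g x :=
            mul_nonneg (sq_nonneg _) (sq_nonneg _)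
          simpa [hz, hx0] using this
        · rw [if_pos ⟨hx, hz⟩, div_mul_cancel₀ _ hz]
          have : (0:ℝ) ≤ (1 + L) ^ 2 * g x :=
            mul_nonneg (sq_nonneg _) (sq_nonneg _)
          simpa using this
      · rw [if_neg (by tauto), one_mul]
        have hgx : g x = ξ n x ^ 2 := by
          simp [g, Set.indicator_of_mem (Set.mem_compl hx)]
        rw [hgx]
        have h1 : ξ n (γ.symm x) - ξ n x ≤ (1 + L) * ξ n x := by
          nlinarith [hA x, hpos n x]
        have h2 : -((1 + L) * ξ n x) ≤ ξ n (γ.symm x) - ξ n x := by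
          nlinarith [hpos n (γ.symm x), hpos n x]
        calc (ξ n (γ.symm x) - ξ n x) ^ 2 ≤ ((1 + L) * ξ n x) ^ 2 := sq_le_sq' h2 h1
          _ = (1 + L) ^ 2 * ξ n x ^ 2 := by ring
    have hfsum : Summable fun x =>
        ((if x ∈ V n ∧ ξ n (γ.symm x) ≠ 0 then ξ n x / ξ n (γ.symm x) else 1) *
          ξ n (γ.symm x) - ξ n x) ^ 2 :=
      (hgsum.mul_left _).of_nonneg_of_le (fun x => sq_nonneg _) key
    have htsum : (∑' x : X, ((if x ∈ V n ∧ ξ n (γ.symm x) ≠ 0 then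
          ξ n x / ξ n (γ.symm x) else 1) * ξ n (γ.symm x) - ξ n x) ^ 2)
        ≤ (1 + L) ^ 2 * ∑' x, g x := by
      calc _ ≤ ∑' x, (1 + L) ^ 2 * g x := Summable.tsum_le_tsum key hfsum (hgsum.mul_left _)
        _ = (1 + L) ^ 2 * ∑' x, g x := tsum_mul_left
    have hsq1 : Real.sqrt ((1 + L) ^ 2 * ∑' x, g x) = (1 + L) * Real.sqrt (∑' x, g x) := by
      rw [Real.sqrt_mul (sq_nonneg _), Real.sqrt_sq (by linarith)]
    have := Real.sqrt_le_sqrt htsum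
    rw [hsq1] at this
    have hs0 : 0 ≤ Real.sqrt (∑' x, g x) := Real.sqrt_nonneg _
    calc Real.sqrt (∑' x : X, ((if x ∈ V n ∧ ξ n (γ.symm x) ≠ 0 then
          ξ n x / ξ n (γ.symm x) else 1) * ξ n (γ.symm x) - ξ n x) ^ 2)
        ≤ (1 + L) * Real.sqrt (∑' x, g x) := this
      _ ≤ 2 * Real.sqrt (∑' x, g x) * (1 + L) := by nlinarith
end
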